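/- arXiv:2101.01034 — 13 statements merged into one kernel-verified Lean document; each statement's English description precedes it below -/
import Mathlib

section
/- If a linear form φ(x₁,…,x_h) = c₁x₁ + ⋯ + c_hx_h with coefficients in a field F admits disjoint subsets I₁, I₂ of {1,…,h}, not both empty, with ∑_{i∈I₁} cᵢ = ∑_{i∈I₂} cᵢ, then no subset A of a vector space V over F with |A| ≥ 2 is a φ-Sidon set. -/
open Finset

variable {F : Type*} [Field F] {V : Type*} [AddCommGroup V] [Module F V]

/-- The linear form with coefficients `c` has property N: there do not exist disjoint
subsets `I₁`, `I₂` of `{1,…,h}`, not both empty, with equal coefficient subset sums. -/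
def PropN {h : ℕ} (c : Fin h → F) : Prop :=
  ¬ ∃ I₁ I₂ : Finset (Fin h), Disjoint I₁ I₂ ∧ ¬(I₁ = ∅ ∧ I₂ = ∅) ∧
      ∑ i ∈ I₁, c i = ∑ i ∈ I₂, c i

/-- `A` is a Sidon set for the linear form `φ = ∑ cᵢ xᵢ`. -/
def IsSidonSet {h : ℕ} (c : Fin h → F) (A : Set V) : Prop :=
  A.Nonempty ∧ ∀ a a' : Fin h → V, (∀ i, a i ∈ A) → (∀ i, a' i ∈ A) →
    ∑ i, c i • a i = ∑ i, c i • a' i → a = a'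

/-- `Φ_J(A,b) = φ_J(A) + (∑_{j ∈ Jᶜ} c_j) • b`. -/
def PhiJ {h : ℕ} (c : Fin h → F) (J : Finset (Fin h)) (A : Set V) (b : V) : Set V :=
  {w | ∃ f : Fin h → V, (∀ j ∈ J, f j ∈ A) ∧
    w = (∑ j ∈ J, c j • f j) + (∑ j ∈ Jᶜ, c j) • b}

theorem no_Sidon_of_equal_subset_sums {h : ℕ} (c : Fin h → F)
    (hex : ∃ I₁ I₂ : Finset (Fin h), Disjoint I₁ I₂ ∧ ¬(I₁ = ∅ ∧ I₂ = ∅) ∧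
      ∑ i ∈ I₁, c i = ∑ i ∈ I₂, c i)
    (A : Set V) (hA : A.Nontrivial) :
    ¬ IsSidonSet c A := by
  obtain ⟨I₁, I₂, hdisj, hne, hsum⟩ := hex
  obtain ⟨u, hu, v, hv, huv⟩ := hA
  rintro ⟨-, hS⟩
  have key : ∀ I : Finset (Fin h),
      ∑ i, c i • (if i ∈ I then u else v) = (∑ i, c i • v) + (∑ i ∈ I, c i) • (u - v) := by
    intro I
    have h1 : ∀ i : Fin h, c i • (if i ∈ I then u else v)
        = c i • v + (if i ∈ I then c i • (u - v) else 0) := by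
      intro i
      split <;> simp [smul_sub]
    rw [Finset.sum_congr rfl fun i _ => h1 i, Finset.sum_add_distrib,
      Finset.sum_ite_mem, Finset.univ_inter, Finset.sum_smul]
  set a : Fin h → V := fun i => if i ∈ I₁ then u else v with ha
  set a' : Fin h → V := fun i => if i ∈ I₂ then u else v with ha'
  have hmem : ∀ i, a i ∈ A := fun i => by simp only [ha]; split <;> assumption
  have hmem' : ∀ i, a' i ∈ A := fun i => by simp only [ha']; split <;> assumption
  have heq : ∑ i, c i • a i = ∑ i, c i • a' i := by
    rw [ha, ha', key, key, hsum]
  have : a = a' := hS a a' hmem hmem' heq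
  rcases Finset.eq_empty_or_nonempty I₁ with h1 | ⟨i, hi⟩
  · rcases Finset.eq_empty_or_nonempty I₂ with h2 | ⟨i, hi⟩
    · exact hne ⟨h1, h2⟩
    · have hi1 : i ∉ I₁ := by simp [h1]
      have := congrFun this i
      simp only [ha, ha', if_neg hi1, if_pos hi] at this
      exact huv this.symm
  · have hi2 : i ∉ I₂ := Finset.disjoint_left.mp hdisj hi
    have := congrFun this i
    simp only [ha, ha', if_pos hi, if_neg hi2] at this
    exact huv this
end

section
/- If A is a φ-Sidon set, then A is a φ_J-Sidon set for every nonempty subset J of {1,…,h}, where φ_J = ∑_{j∈J} c_jx_j is the contraction of φ to J. -/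
open Finset

variable {F : Type*} [Field F] {V : Type*} [AddCommGroup V] [Module F V]

theorem sidon_contraction {h : ℕ} (c : Fin h → F) (A : Set V)
    (hA : IsSidonSet c A) (J : Finset (Fin h)) (hJ : J.Nonempty) :
    ∀ a a' : Fin h → V, (∀ j ∈ J, a j ∈ A) → (∀ j ∈ J, a' j ∈ A) →
      ∑ j ∈ J, c j • a j = ∑ j ∈ J, c j • a' j → ∀ j ∈ J, a j = a' j := by
  obtain ⟨⟨b, hb⟩, hS⟩ := hA
  intro a a' ha ha' hsum
  set a1 : Fin h → V := fun i => if i ∈ J then a i else b with ha1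
  set a2 : Fin h → V := fun i => if i ∈ J then a' i else b with ha2
  have key : a1 = a2 := by
    apply hS
    · intro i; by_cases hi : i ∈ J <;> simp [a1, hi, ha, hb]
    · intro i; by_cases hi : i ∈ J <;> simp [a2, hi, ha', hb]
    · rw [← Finset.sum_add_sum_compl J, ← Finset.sum_add_sum_compl J
        (fun i => c i • a2 i)]
      have h1 : ∀ j ∈ J, c j • a1 j = c j • a j := by intro j hj; simp [a1, hj]
      have h2 : ∀ j ∈ J, c j • a2 j = c j • a' j := by intro j hj; simp [a2, hj]
      have h3 : ∀ j ∈ Jᶜ, c j • a1 j = c j • b := by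
        intro j hj; simp [a1, Finset.mem_compl.mp hj]
      have h4 : ∀ j ∈ Jᶜ, c j • a2 j = c j • b := by
        intro j hj; simp [a2, Finset.mem_compl.mp hj]
      rw [Finset.sum_congr rfl h1, Finset.sum_congr rfl h2,
        Finset.sum_congr rfl h3, Finset.sum_congr rfl h4, hsum]
  intro j hj
  have := congrFun key j
  simpa [a1, a2, hj] using this
end

section
/- If A ∪ {b} is a φ-Sidon set (with b ∉ A), then the sets Φ_J(A,b), for J ranging over all subsets of {1,…,h}, are pairwise disjoint. -/
open Finset

variable {F : Type*} [Field F] {V : Type*} [AddCommGroup V] [Module F V]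

theorem PhiJ_pairwise_disjoint_of_sidon {h : ℕ} (c : Fin h → F)
    (A : Set V) (b : V) (hb : b ∉ A) (hS : IsSidonSet c (A ∪ {b})) :
    ∀ J₁ J₂ : Finset (Fin h), J₁ ≠ J₂ →
      Disjoint (PhiJ c J₁ A b) (PhiJ c J₂ A b) := by
  have key : ∀ J₁ J₂ : Finset (Fin h), (∃ i, i ∈ J₁ ∧ i ∉ J₂) →
      Disjoint (PhiJ c J₁ A b) (PhiJ c J₂ A b) := by
    rintro J₁ J₂ ⟨i, hi1, hi2⟩
    rw [Set.disjoint_left]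
    rintro w ⟨f, hf, rfl⟩ ⟨g, hg, hw⟩
    set a : Fin h → V := fun j => if j ∈ J₁ then f j else b with ha
    set a' : Fin h → V := fun j => if j ∈ J₂ then g j else b with ha'
    have sum1 : ∑ j, c j • a j = (∑ j ∈ J₁, c j • f j) + (∑ j ∈ J₁ᶜ, c j) • b := by
      rw [← Finset.sum_add_sum_compl J₁, Finset.sum_smul]
      congr 1
      · exact Finset.sum_congr rfl fun j hj => by simp [ha, hj]
      · exact Finset.sum_congr rfl fun j hj => by
          simp [ha, Finset.mem_compl.mp hj]
    have sum2 : ∑ j, c j • a' j = (∑ j ∈ J₂, c j • g j) + (∑ j ∈ J₂ᶜ, c j) • b := by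
      rw [← Finset.sum_add_sum_compl J₂, Finset.sum_smul]
      congr 1
      · exact Finset.sum_congr rfl fun j hj => by simp [ha', hj]
      · exact Finset.sum_congr rfl fun j hj => by
          simp [ha', Finset.mem_compl.mp hj]
    have hmem : ∀ j, a j ∈ A ∪ {b} := by
      intro j
      by_cases hj : j ∈ J₁
      · exact Or.inl (by simpa [ha, hj] using hf j hj)
      · exact Or.inr (by simp [ha, hj])
    have hmem' : ∀ j, a' j ∈ A ∪ {b} := by
      intro j
      by_cases hj : j ∈ J₂
      · exact Or.inl (by simpa [ha', hj] using hg j hj)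
      · exact Or.inr (by simp [ha', hj])
    have heq : a = a' := hS.2 a a' hmem hmem' (by rw [sum1, sum2, ← hw])
    have hi := congrFun heq i
    simp [ha, ha', hi1, hi2] at hi
    exact hb (hi ▸ hf i hi1)
  intro J₁ J₂ hne
  by_cases h12 : J₁ ⊆ J₂
  · have h21 : ¬ J₂ ⊆ J₁ := fun h21 => hne (Finset.Subset.antisymm h12 h21)
    obtain ⟨i, hi1, hi2⟩ := Finset.not_subset.mp h21
    exact (key J₂ J₁ ⟨i, hi1, hi2⟩).symm
  · obtain ⟨i, hi1, hi2⟩ := Finset.not_subset.mp h12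
    exact key J₁ J₂ ⟨i, hi1, hi2⟩
end

section
/- If A is a φ-Sidon set, b ∈ V \ A, and the sets Φ_J(A,b) for J ⊆ {1,…,h} are pairwise disjoint, then A ∪ {b} is a φ-Sidon set. -/
open Finset

variable {F : Type*} [Field F] {V : Type*} [AddCommGroup V] [Module F V]

theorem sidon_insert_of_PhiJ_pairwise_disjoint {h : ℕ} (c : Fin h → F)
    (A : Set V) (b : V) (hb : b ∉ A) (hA : IsSidonSet c A)
    (hdisj : ∀ J₁ J₂ : Finset (Fin h), J₁ ≠ J₂ →
      Disjoint (PhiJ c J₁ A b) (PhiJ c J₂ A b)) :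
    IsSidonSet c (A ∪ {b}) := by
  classical
  obtain ⟨a₀, ha₀⟩ := hA.1
  refine ⟨⟨b, Or.inr rfl⟩, ?_⟩
  intro a a' ha ha' heq
  -- splitting lemma
  have split : ∀ (f : Fin h → V), (∀ i, f i ∈ A ∪ {b}) →
      ∑ i, c i • f i = (∑ i ∈ Finset.univ.filter (fun i => f i ∈ A), c i • f i)
        + (∑ i ∈ (Finset.univ.filter (fun i => f i ∈ A))ᶜ, c i) • b := by
    intro f hf
    rw [Finset.sum_smul,
      ← Finset.sum_add_sum_compl (Finset.univ.filter (fun i => f i ∈ A))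
        (fun i => c i • f i)]
    congr 1
    refine Finset.sum_congr rfl fun i hi => ?_
    have hib : f i = b := by
      rcases hf i with h1 | h1
      · simp only [Finset.mem_compl, Finset.mem_filter, Finset.mem_univ,
          true_and] at hi
        exact absurd h1 hi
      · exact h1
    rw [hib]
  set J₁ : Finset (Fin h) := Finset.univ.filter (fun i => a i ∈ A) with hJ₁
  set J₂ : Finset (Fin h) := Finset.univ.filter (fun i => a' i ∈ A) with hJ₂
  have hs1 := split a ha
  have hs2 := split a' ha'
  have hmem1 : (∑ i, c i • a i) ∈ PhiJ c J₁ A b :=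
    ⟨a, fun j hj => (Finset.mem_filter.mp hj).2, hs1⟩
  have hmem2 : (∑ i, c i • a i) ∈ PhiJ c J₂ A b := by
    rw [heq]; exact ⟨a', fun j hj => (Finset.mem_filter.mp hj).2, hs2⟩
  have hJeq : J₁ = J₂ := by
    by_contra hne
    exact Set.disjoint_left.mp (hdisj J₁ J₂ hne) hmem1 hmem2
  -- cancel the b part
  have hcore : ∑ i ∈ J₁, c i • a i = ∑ i ∈ J₁, c i • a' i := by
    have : (∑ i ∈ J₁, c i • a i) + (∑ i ∈ J₁ᶜ, c i) • b
        = (∑ i ∈ J₁, c i • a' i) + (∑ i ∈ J₁ᶜ, c i) • b := by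
      rw [← hs1, heq, hs2, hJeq]
    exact add_right_cancel this
  set g : Fin h → V := fun i => if i ∈ J₁ then a i else a₀ with hg
  set g' : Fin h → V := fun i => if i ∈ J₁ then a' i else a₀ with hg'
  have hgA : ∀ i, g i ∈ A := by
    intro i
    by_cases hi : i ∈ J₁
    · simp only [hg, if_pos hi]; exact (Finset.mem_filter.mp hi).2
    · simp only [hg, if_neg hi]; exact ha₀
  have hg'A : ∀ i, g' i ∈ A := by
    intro i
    by_cases hi : i ∈ J₁
    · simp only [hg', if_pos hi]
      have : i ∈ J₂ := hJeq ▸ hi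
      exact (Finset.mem_filter.mp this).2
    · simp only [hg', if_neg hi]; exact ha₀
  have hsum : ∀ (f : Fin h → V), ∑ i, c i • (fun i => if i ∈ J₁ then f i else a₀) i
      = (∑ i ∈ J₁, c i • f i) + (∑ i ∈ J₁ᶜ, c i • a₀) := by
    intro f
    rw [← Finset.sum_add_sum_compl J₁]
    congr 1
    · exact Finset.sum_congr rfl fun i hi => by simp [if_pos hi]
    · exact Finset.sum_congr rfl fun i hi => by
        simp [if_neg (Finset.mem_compl.mp hi)]
  have hgeq : g = g' := by
    apply hA.2 g g' hgA hg'A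
    rw [hg, hg', hsum a, hsum a', hcore]
  funext i
  by_cases hi : i ∈ J₁
  · have h1 : g i = g' i := congrFun hgeq i
    simpa only [hg, hg', if_pos hi] using h1
  · have h1 : a i = b := by
      rcases ha i with h1 | h1
      · exact absurd (Finset.mem_filter.mpr ⟨Finset.mem_univ i, h1⟩) hi
      · exact h1
    have hi2 : i ∉ J₂ := hJeq ▸ hi
    have h2 : a' i = b := by
      rcases ha' i with h2 | h2
      · exact absurd (Finset.mem_filter.mpr ⟨Finset.mem_univ i, h2⟩) hi2
      · exact h2
    rw [h1, h2]
end

section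
/- Let V be an infinite vector space over a field F, X an infinite subset of V, and φ = ∑_{i=1}^h cᵢxᵢ a linear form with nonzero coefficients in F. The following are equivalent: (i) X contains an infinite φ-Sidon set; (ii) X contains a φ-Sidon set of cardinality at least 2; (iii) φ has property N. -/
open Finset

variable {F : Type*} [Field F] {V : Type*} [AddCommGroup V] [Module F V]

/-!
Property N says exactly that `I ↦ ∑_{i ∈ I} cᵢ` is injective on subsets of `{1,…,h}`.
Comparing `φ(x,…,x,y,…,y)` for two patterns of `x`'s shows that a Sidon set with two elements
`x ≠ y` forces this injectivity. Conversely, let `A` be a finite Sidon set, `a₀ ∈ A`, and `b` a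
new element. If `b` occurs in `a, a'` over `A ∪ {b}` in the positions `T, T'`, and `g, g'` over `A`
arise by replacing these `b`'s by `a₀`, then `φ(a) = φ(a')` reads
`φ(g) - φ(g') = (∑_{T'} c - ∑_T c) • (b - a₀)`: either `T = T'` and the Sidon property of `A`
applies, or `b` is one of finitely many values. So a maximal Sidon subset of the infinite set `X`,
which exists by Zorn's lemma, cannot be finite.
-/

section SumSmul

variable {ι R M : Type*} [Fintype ι] [DecidableEq ι] [Ring R] [AddCommGroup M] [Module R M]

theorem sum_smul_ite_mem_eq (c : ι → R) (T : Finset ι) (b a₀ : M) (g : ι → M)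
    (hg : ∀ i ∈ T, g i = a₀) :
    ∑ i, c i • (if i ∈ T then b else g i) = ∑ i, c i • g i + (∑ i ∈ T, c i) • (b - a₀) := by
  have hterm : ∀ i, c i • (if i ∈ T then b else g i)
      = c i • g i + if i ∈ T then c i • (b - a₀) else 0 := by
    intro i
    split_ifs with hi
    · rw [hg i hi, smul_sub, add_sub_cancel]
    · rw [add_zero]
  simp only [hterm, sum_add_distrib, sum_ite_mem, univ_inter, sum_smul]

theorem exists_eq_ite_of_forall_mem_insert {A : Set M} {a₀ b : M} (ha₀ : a₀ ∈ A) (c : ι → R)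
    {a : ι → M} (ha : ∀ i, a i ∈ insert b A) :
    ∃ (g : ι → A) (T : Finset ι), (a = fun i => if i ∈ T then b else (g i : M)) ∧
      ∑ i, c i • a i = ∑ i, c i • (g i : M) + (∑ i ∈ T, c i) • (b - a₀) := by
  classical
  let g : ι → A := fun i => if hi : a i = b then ⟨a₀, ha₀⟩ else ⟨a i, (ha i).resolve_left hi⟩
  have ha_eq : a = fun i => if i ∈ univ.filter (a · = b) then b else (g i : M) := by
    funext i
    by_cases hi : a i = b <;> simp [g, hi]
  refine ⟨g, univ.filter (a · = b), ha_eq, ?_⟩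
  conv_lhs => rw [ha_eq]
  exact sum_smul_ite_mem_eq c _ b a₀ _ fun i hi => by simp [g, (mem_filter.mp hi).2]

end SumSmul

section

variable {h : ℕ} {c : Fin h → F}

theorem propN_iff_injective_sum :
    PropN c ↔ Function.Injective (fun I : Finset (Fin h) => ∑ i ∈ I, c i) := by
  constructor
  · intro hN I J hIJ
    by_contra hne
    refine hN ⟨I \ J, J \ I, disjoint_sdiff_sdiff, fun ⟨hIJ', hJI'⟩ => hne ?_, ?_⟩
    · exact Subset.antisymm (sdiff_eq_empty_iff_subset.mp hIJ') (sdiff_eq_empty_iff_subset.mp hJI')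
    · have hI := sum_inter_add_sum_sdiff I J c
      have hJ := sum_inter_add_sum_sdiff J I c
      rw [inter_comm] at hJ
      linear_combination hI - hJ + hIJ
  · rintro hinj ⟨I₁, I₂, hdisj, hne, hsum⟩
    obtain rfl : I₁ = I₂ := hinj hsum
    exact hne ⟨disjoint_self.mp hdisj, disjoint_self.mp hdisj⟩

theorem IsSidonSet.propN {A : Set V} (hS : IsSidonSet c A) (hA : A.Nontrivial) : PropN c := by
  obtain ⟨x, hx, y, hy, hxy⟩ := hA
  rw [propN_iff_injective_sum]
  intro I J hIJ
  have hφ (K : Finset (Fin h)) : ∑ i, c i • (if i ∈ K then x else y)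
      = ∑ i, c i • y + (∑ i ∈ K, c i) • (x - y) :=
    sum_smul_ite_mem_eq c K x y (fun _ => y) fun _ _ => rfl
  have hpattern := hS.2 (fun i => if i ∈ I then x else y) (fun i => if i ∈ J then x else y)
    (fun i => by split_ifs <;> assumption)
    (fun i => by split_ifs <;> assumption)
    (by rw [hφ, hφ, show ∑ i ∈ I, c i = ∑ i ∈ J, c i from hIJ])
  ext i
  have := congrFun hpattern i
  by_cases hI : i ∈ I <;> by_cases hJ : i ∈ J <;> simp_all

theorem isSidonSet_singleton (x : V) : IsSidonSet c {x} :=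
  ⟨Set.singleton_nonempty x, fun _ _ ha ha' _ => funext fun i => (ha i).trans (ha' i).symm⟩

theorem isSidonSet_sUnion_of_isChain {C : Set (Set V)} (hC : IsChain (· ⊆ ·) C)
    (hne : C.Nonempty) (hS : ∀ A ∈ C, IsSidonSet c A) : IsSidonSet c (⋃₀ C) := by
  obtain ⟨A₀, hA₀⟩ := hne
  refine ⟨(hS A₀ hA₀).1.mono (Set.subset_sUnion_of_mem hA₀), fun a a' ha ha' heq => ?_⟩
  obtain ⟨A, hAC, hsub⟩ := hC.directedOn.exists_mem_subset_of_finite_of_subset_sUnion ⟨A₀, hA₀⟩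
    ((Set.finite_range a).union (Set.finite_range a'))
    (Set.union_subset (Set.range_subset_iff.mpr ha) (Set.range_subset_iff.mpr ha'))
  exact (hS A hAC).2 a a' (fun i => hsub (Or.inl ⟨i, rfl⟩)) (fun i => hsub (Or.inr ⟨i, rfl⟩)) heq

theorem IsSidonSet.finite_setOf_not_isSidonSet_insert (hN : PropN c) {A : Set V}
    (hA : A.Finite) (hS : IsSidonSet c A) : {b | ¬ IsSidonSet c (insert b A)}.Finite := by
  obtain ⟨a₀, ha₀⟩ := hS.1
  have := hA.to_subtype
  let φ : (Fin h → A) → V := fun g => ∑ i, c i • (g i : V)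
  refine (Set.finite_range fun p : Finset (Fin h) × Finset (Fin h) × (Fin h → A) × (Fin h → A) =>
    a₀ + (∑ i ∈ p.1, c i - ∑ i ∈ p.2.1, c i)⁻¹ • (φ p.2.2.2 - φ p.2.2.1)).subset ?_
  intro b hb
  by_contra hbad
  refine hb ⟨Set.insert_nonempty b A, fun a a' ha ha' heq => ?_⟩
  obtain ⟨g, T, rfl, hφ⟩ := exists_eq_ite_of_forall_mem_insert ha₀ c ha
  obtain ⟨g', T', rfl, hφ'⟩ := exists_eq_ite_of_forall_mem_insert ha₀ c ha'
  rw [hφ, hφ'] at heq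
  by_cases hsum : ∑ i ∈ T, c i = ∑ i ∈ T', c i
  · obtain rfl : T = T' := propN_iff_injective_sum.mp hN hsum
    have hgg : (fun i => (g i : V)) = fun i => (g' i : V) :=
      hS.2 _ _ (fun i => (g i).2) (fun i => (g' i).2) (add_right_cancel heq)
    funext i
    rw [congrFun hgg i]
  · have hb : (∑ i ∈ T, c i - ∑ i ∈ T', c i) • (b - a₀) = φ g' - φ g := by
      rw [sub_smul, sub_eq_sub_iff_add_eq_add]
      exact (add_comm _ _).trans heq
    refine absurd ⟨(T, T', g, g'), ?_⟩ hbad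
    dsimp only
    rw [← hb, inv_smul_smul₀ (sub_ne_zero.mpr hsum), add_sub_cancel]

theorem exists_infinite_isSidonSet_subset (hN : PropN c) {X : Set V} (hX : X.Infinite) :
    ∃ A ⊆ X, A.Infinite ∧ IsSidonSet c A := by
  obtain ⟨x₀, hx₀⟩ := hX.nonempty
  obtain ⟨M, -, hM⟩ := zorn_subset_nonempty {A | A ⊆ X ∧ IsSidonSet c A}
    (fun C hCS hC hne => ⟨⋃₀ C, ⟨Set.sUnion_subset fun A hA => (hCS hA).1,
      isSidonSet_sUnion_of_isChain hC hne fun A hA => (hCS hA).2⟩,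
      fun _ => Set.subset_sUnion_of_mem⟩)
    {x₀} ⟨Set.singleton_subset_iff.mpr hx₀, isSidonSet_singleton x₀⟩
  refine ⟨M, hM.prop.1, fun hM_fin => ?_, hM.prop.2⟩
  obtain ⟨b, hbX, hb⟩ :=
    (hX.sdiff (hM_fin.union (hM.prop.2.finite_setOf_not_isSidonSet_insert hN hM_fin))).nonempty
  refine hb (Or.inl (hM.mem_of_prop_insert ⟨Set.insert_subset hbX hM.prop.1, ?_⟩))
  by_contra hbad
  exact hb (Or.inr hbad)

end

theorem sidon_existence_tfae_general {h : ℕ} (c : Fin h → F)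
    (X : Set V) (hX : X.Infinite) :
    ((∃ A ⊆ X, A.Infinite ∧ IsSidonSet c A) ↔ PropN c) ∧
    ((∃ A ⊆ X, A.Nontrivial ∧ IsSidonSet c A) ↔ PropN c) := by
  refine ⟨⟨fun ⟨_, _, hA, hS⟩ => hS.propN hA.nontrivial, (exists_infinite_isSidonSet_subset · hX)⟩,
    ⟨fun ⟨_, _, hA, hS⟩ => hS.propN hA, fun hN => ?_⟩⟩
  obtain ⟨A, hAX, hA, hS⟩ := exists_infinite_isSidonSet_subset hN hX
  exact ⟨A, hAX, hA.nontrivial, hS⟩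

theorem sidon_existence_tfae {h : ℕ} (c : Fin h → F) (hc : ∀ i, c i ≠ 0)
    [Infinite V] (X : Set V) (hX : X.Infinite) :
    ((∃ A ⊆ X, A.Infinite ∧ IsSidonSet c A) ↔ PropN c) ∧
    ((∃ A ⊆ X, A.Nontrivial ∧ IsSidonSet c A) ↔ PropN c) :=
  sidon_existence_tfae_general c X hX
end

section
/- Let F be a field with a nontrivial absolute value, V a nonzero normed vector space over F, φ = ∑_{i=1}^h cᵢxᵢ a linear form with property N, A' a finite subset of V, and b ∈ V. Then for every ε > 0 there exist infinitely many nonzero vectors a ∈ V with ‖a − b‖ < ε such that the sets Φ_J(A',a), for all J ⊆ {1,…,h}, are pairwise disjoint. -/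
open Finset

variable {F : Type*} [Field F] {V : Type*} [AddCommGroup V] [Module F V]

/-- Property N implies distinct subsets have distinct coefficient sums. -/
lemma propN_sum_ne {h : ℕ} {c : Fin h → F} (hN : PropN c)
    {J₁ J₂ : Finset (Fin h)} (hne : J₁ ≠ J₂) : ∑ i ∈ J₁, c i ≠ ∑ i ∈ J₂, c i := by
  intro heq
  apply hN
  refine ⟨J₁ \ J₂, J₂ \ J₁, disjoint_sdiff_sdiff, ?_, ?_⟩
  · rintro ⟨h1, h2⟩
    exact hne (subset_antisymm (Finset.sdiff_eq_empty_iff_subset.mp h1)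
      (Finset.sdiff_eq_empty_iff_subset.mp h2))
  · have e1 := Finset.sum_inter_add_sum_sdiff J₁ J₂ c
    have e2 := Finset.sum_inter_add_sum_sdiff J₂ J₁ c
    rw [Finset.inter_comm] at e2
    exact add_left_cancel (e1.trans (heq.trans e2.symm))

theorem exists_perturbation_PhiJ_disjoint {F : Type*} [Field F]
    {V : Type*} [AddCommGroup V] [Module F V]
    (v : AbsoluteValue F ℝ) (hv : ∃ c : F, c ≠ 0 ∧ v c ≠ 1)
    (hV : ∃ x : V, x ≠ 0)
    (N : V → ℝ) (hN0 : ∀ x : V, N x = 0 ↔ x = 0)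
    (hNs : ∀ (a : F) (x : V), N (a • x) = v a * N x)
    (hNt : ∀ x y : V, N (x + y) ≤ N x + N y)
    {h : ℕ} (c : Fin h → F) (hN : PropN c)
    (A' : Set V) (hA' : A'.Finite) (b : V) (ε : ℝ) (hε : 0 < ε) :
    {a : V | a ≠ 0 ∧ N (a - b) < ε ∧
      ∀ J₁ J₂ : Finset (Fin h), J₁ ≠ J₂ →
        Disjoint (PhiJ c J₁ A' a) (PhiJ c J₂ A' a)}.Infinite := by
  classical
  obtain ⟨x, hx⟩ := hV
  -- the norm is nonneg
  have hzero : N (0 : V) = 0 := (hN0 0).mpr rfl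
  have hNneg : ∀ y : V, 0 ≤ N y := by
    intro y
    have hneg : N (-y) = N y := by
      have := hNs (-1) y
      simpa [v.map_one] using this
    have := hNt y (-y)
    rw [add_neg_cancel, hzero, hneg] at this
    linarith
  have hNx : 0 < N x := lt_of_le_of_ne (hNneg x) (fun hc => hx ((hN0 x).mp hc.symm))
  -- a scalar of absolute value strictly between 0 and 1
  obtain ⟨c₀, hc₀pos, hc₀lt⟩ : ∃ c₀ : F, 0 < v c₀ ∧ v c₀ < 1 := by
    obtain ⟨c', hc'0, hc'1⟩ := hv
    rcases lt_or_gt_of_ne hc'1 with hl | hg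
    · exact ⟨c', v.pos hc'0, hl⟩
    · refine ⟨c'⁻¹, v.pos (inv_ne_zero hc'0), ?_⟩
      rw [map_inv₀]
      exact inv_lt_one_of_one_lt₀ hg
  obtain ⟨n₀, hn₀⟩ : ∃ n₀ : ℕ, (v c₀) ^ n₀ < ε / N x :=
    exists_pow_lt_of_lt_one (div_pos hε hNx) hc₀lt
  -- finite set of possible sums over J
  set S : Finset (Fin h) → Set V := fun J =>
    (fun f : Fin h → V => ∑ j ∈ J, c j • f j) '' (Set.univ.pi fun _ => A' ∪ {0}) with hS
  have hSfin : ∀ J, (S J).Finite := fun J =>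
    ((Set.Finite.pi fun _ => hA'.union (Set.finite_singleton 0)).image _)
  have hSmem : ∀ (J : Finset (Fin h)) (f : Fin h → V), (∀ j ∈ J, f j ∈ A') →
      (∑ j ∈ J, c j • f j) ∈ S J := by
    intro J f hf
    refine ⟨fun j => if j ∈ J then f j else 0, ?_, ?_⟩
    · intro j _
      by_cases hj : j ∈ J
      · simp [hj, hf j hj]
      · simp [hj]
    · exact Finset.sum_congr rfl fun j hj => by simp [hj]
  -- the finite "bad" set
  set B : Set V := ⋃ (J₁ : Finset (Fin h)) (J₂ : Finset (Fin h)),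
    (fun p : V × V => (∑ i ∈ J₂, c i - ∑ i ∈ J₁, c i)⁻¹ • (p.2 - p.1)) ''
      ((S J₁) ×ˢ (S J₂)) with hB
  have hBfin : B.Finite :=
    Set.finite_iUnion fun J₁ => Set.finite_iUnion fun J₂ =>
      ((hSfin J₁).prod (hSfin J₂)).image _
  -- the injection giving infinitely many good points
  set g : ℕ → V := fun n => b + c₀ ^ (n₀ + n) • x with hg
  have hginj : Function.Injective g := by
    intro m n hmn
    have hsmul : (c₀ ^ (n₀ + m) - c₀ ^ (n₀ + n)) • x = 0 := by
      rw [sub_smul, sub_eq_zero]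
      exact add_left_cancel hmn
    have hv0 : v (c₀ ^ (n₀ + m) - c₀ ^ (n₀ + n)) * N x = 0 := by
      rw [← hNs, hsmul, hzero]
    have hd0 : c₀ ^ (n₀ + m) - c₀ ^ (n₀ + n) = 0 := by
      have := mul_eq_zero.mp hv0
      rcases this with h1 | h2
      · exact v.eq_zero.mp h1
      · exact absurd h2 (ne_of_gt hNx)
    have hpow : c₀ ^ (n₀ + m) = c₀ ^ (n₀ + n) := sub_eq_zero.mp hd0
    have hvpow : (v c₀) ^ (n₀ + m) = (v c₀) ^ (n₀ + n) := by
      rw [← map_pow, ← map_pow, hpow]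
    have := (pow_right_strictAnti₀ hc₀pos hc₀lt).injective hvpow
    omega
  -- range of g is inside the ball
  have hball : ∀ n, N (g n - b) < ε := by
    intro n
    have : N (g n - b) = (v c₀) ^ (n₀ + n) * N x := by
      rw [hg]
      simp only [add_sub_cancel_left]
      rw [hNs, map_pow]
    rw [this]
    have h1 : (v c₀) ^ (n₀ + n) ≤ (v c₀) ^ n₀ :=
      pow_le_pow_of_le_one (le_of_lt hc₀pos) (le_of_lt hc₀lt) (Nat.le_add_right _ _)
    calc (v c₀) ^ (n₀ + n) * N x ≤ (v c₀) ^ n₀ * N x := by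
            exact mul_le_mul_of_nonneg_right h1 (hNneg x)
      _ < (ε / N x) * N x := by exact mul_lt_mul_of_pos_right hn₀ hNx
      _ = ε := div_mul_cancel₀ ε (ne_of_gt hNx)
  -- a point outside B (and nonzero) has the disjointness property
  have hgood : ∀ a : V, a ∉ B → ∀ J₁ J₂ : Finset (Fin h), J₁ ≠ J₂ →
      Disjoint (PhiJ c J₁ A' a) (PhiJ c J₂ A' a) := by
    intro a haB J₁ J₂ hne
    rw [Set.disjoint_left]
    rintro w ⟨f, hf, hwf⟩ ⟨k, hk, hwk⟩
    apply haB
    set s₁ : F := ∑ i ∈ J₁, c i with hs₁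
    set s₂ : F := ∑ i ∈ J₂, c i with hs₂
    have hd : s₂ - s₁ ≠ 0 := sub_ne_zero.mpr (Ne.symm (propN_sum_ne hN hne))
    have hcompl : (∑ j ∈ J₁ᶜ, c j) - (∑ j ∈ J₂ᶜ, c j) = s₂ - s₁ := by
      have h1 := Finset.sum_add_sum_compl J₁ c
      have h2 := Finset.sum_add_sum_compl J₂ c
      rw [hs₁, hs₂]
      linear_combination h1 - h2
    have key : (s₂ - s₁) • a = (∑ j ∈ J₂, c j • k j) - (∑ j ∈ J₁, c j • f j) := by
      rw [← hcompl, sub_smul]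
      rw [sub_eq_sub_iff_add_eq_add, add_comm]
      rw [hwf] at hwk
      linear_combination (norm := abel) hwk
    have ha : a = (s₂ - s₁)⁻¹ • ((∑ j ∈ J₂, c j • k j) - (∑ j ∈ J₁, c j • f j)) := by
      rw [← key, inv_smul_smul₀ hd]
    rw [hB]
    refine Set.mem_iUnion.mpr ⟨J₁, Set.mem_iUnion.mpr ⟨J₂, ?_⟩⟩
    exact ⟨(∑ j ∈ J₁, c j • f j, ∑ j ∈ J₂, c j • k j),
      ⟨hSmem J₁ f hf, hSmem J₂ k hk⟩, ha.symm⟩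
  -- assemble
  have hsub : (Set.range g \ (B ∪ {0})) ⊆
      {a : V | a ≠ 0 ∧ N (a - b) < ε ∧
        ∀ J₁ J₂ : Finset (Fin h), J₁ ≠ J₂ →
          Disjoint (PhiJ c J₁ A' a) (PhiJ c J₂ A' a)} := by
    rintro a ⟨⟨n, rfl⟩, hnot⟩
    rw [Set.mem_union, not_or] at hnot
    refine ⟨fun h0 => hnot.2 (by simp [h0]), hball n, hgood _ hnot.1⟩
  exact Set.Infinite.mono hsub
    ((Set.infinite_range_of_injective hginj).diff (hBfin.union (Set.finite_singleton 0)))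
end

section
/- Let F be a field with a nontrivial absolute value, V a normed vector space over F, and φ a linear form with coefficients in F having property N. For every sequence (ε_k) of positive reals and every sequence (b_k) of vectors in V, there is a sequence (a_k) in V whose set of terms is a φ-Sidon set and such that ‖a_k − b_k‖ < ε_k for all k. -/
open Finset

variable {F : Type*} [Field F] {V : Type*} [AddCommGroup V] [Module F V]

/-- Auxiliary recursive construction: each term may depend on all previous ones. -/
def buildSeq {V : Type*} (pick : ∀ k : ℕ, (Fin k → V) → V) : ℕ → V
  | k => pick k (fun j => buildSeq pick j.val)
termination_by k => k
decreasing_by exact j.isLt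

lemma buildSeq_eq {V : Type*} (pick : ∀ k : ℕ, (Fin k → V) → V) (k : ℕ) :
    buildSeq pick k = pick k (fun j => buildSeq pick j.val) := by
  rw [buildSeq]

theorem sidon_perturbation {F : Type*} [Field F]
    {V : Type*} [AddCommGroup V] [Module F V]
    (v : AbsoluteValue F ℝ) (hv : ∃ c : F, c ≠ 0 ∧ v c ≠ 1)
    (N : V → ℝ) (hN0 : ∀ x : V, N x = 0 ↔ x = 0)
    (hNs : ∀ (a : F) (x : V), N (a • x) = v a * N x)
    (hNt : ∀ x y : V, N (x + y) ≤ N x + N y)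
    {h : ℕ} (c : Fin h → F) (hN : PropN c)
    (ε : ℕ → ℝ) (hε : ∀ k, 0 < ε k) (b : ℕ → V) :
    ∃ a : ℕ → V, IsSidonSet c (Set.range a) ∧ ∀ k, N (a k - b k) < ε k := by
  classical
  have hNzero : N (0 : V) = 0 := (hN0 0).mpr rfl
  by_cases hVtriv : ∀ x : V, x = 0
  · refine ⟨b, ⟨⟨b 0, ⟨0, rfl⟩⟩, ?_⟩, ?_⟩
    · intro x x' _ _ _
      funext i
      rw [hVtriv (x i), hVtriv (x' i)]
    · intro k
      simpa [sub_self, hNzero] using hε k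
  push_neg at hVtriv
  obtain ⟨u, hu⟩ := hVtriv
  -- a scalar of absolute value strictly between 0 and 1
  obtain ⟨c0, hc0, hvc0⟩ : ∃ c0 : F, c0 ≠ 0 ∧ v c0 < 1 := by
    obtain ⟨c1, hc1, hvc1⟩ := hv
    rcases lt_or_gt_of_ne hvc1 with hlt | hgt
    · exact ⟨c1, hc1, hlt⟩
    · refine ⟨c1⁻¹, inv_ne_zero hc1, ?_⟩
      rw [map_inv₀]
      exact inv_lt_one_of_one_lt₀ hgt
  have hvc0pos : 0 < v c0 := v.pos hc0
  -- basic facts about N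
  have hNneg : ∀ x : V, N (-x) = N x := by
    intro x
    have := hNs (-1) x
    simpa using this
  have hNnonneg : ∀ x : V, 0 ≤ N x := by
    intro x
    have h2 : N (x + (-x)) ≤ N x + N (-x) := hNt x (-x)
    rw [add_neg_cancel, hNzero, hNneg] at h2
    linarith
  -- avoidance lemma
  have avoid : ∀ (S : Set V), S.Finite → ∀ (b0 : V) (ε0 : ℝ), 0 < ε0 →
      ∃ x, x ∉ S ∧ N (x - b0) < ε0 := by
    intro S hS b0 ε0 hε0
    have hNu : 0 < N u := lt_of_le_of_ne (hNnonneg u) (fun hh => hu ((hN0 u).mp hh.symm))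
    have hinj : Function.Injective (fun n : ℕ => b0 + c0 ^ n • u) := by
      intro m n hmn
      simp only [add_right_inj] at hmn
      have hcc : c0 ^ m = c0 ^ n := by
        by_contra hne
        have : (c0 ^ m - c0 ^ n) • u = 0 := by rw [sub_smul, hmn, sub_self]
        have := congrArg (fun w => (c0 ^ m - c0 ^ n)⁻¹ • w) this
        simp only [smul_smul, inv_mul_cancel₀ (sub_ne_zero.mpr hne), one_smul, smul_zero] at this
        exact hu this
      have hvv : (v c0) ^ m = (v c0) ^ n := by
        rw [← map_pow, ← map_pow, hcc]
      exact (pow_right_strictAnti₀ hvc0pos hvc0).injective hvv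
    -- small perturbations
    obtain ⟨n₀, hn₀⟩ : ∃ n₀ : ℕ, (v c0) ^ n₀ * N u < ε0 := by
      have htend : Filter.Tendsto (fun n : ℕ => (v c0) ^ n * N u) Filter.atTop
          (nhds (0 * N u)) :=
        (tendsto_pow_atTop_nhds_zero_of_lt_one (le_of_lt hvc0pos) hvc0).mul_const (N u)
      rw [zero_mul] at htend
      exact (htend.eventually (gt_mem_nhds hε0)).exists
    have hbadfin : {n : ℕ | (b0 + c0 ^ n • u) ∈ S}.Finite := by
      have := hS.preimage (hinj.injOn)
      exact this
    have hinf : ({n : ℕ | n₀ ≤ n} \ {n : ℕ | (b0 + c0 ^ n • u) ∈ S}).Infinite := by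
      have h1 : ({n : ℕ | n₀ ≤ n}).Infinite := Set.Ici_infinite n₀
      exact h1.diff hbadfin
    obtain ⟨n, hn⟩ := hinf.nonempty
    refine ⟨b0 + c0 ^ n • u, hn.2, ?_⟩
    have : b0 + c0 ^ n • u - b0 = c0 ^ n • u := by abel
    rw [this, hNs, map_pow]
    calc (v c0) ^ n * N u ≤ (v c0) ^ n₀ * N u := by
          apply mul_le_mul_of_nonneg_right _ (le_of_lt hNu)
          exact pow_le_pow_of_le_one (le_of_lt hvc0pos) (le_of_lt hvc0) hn.1
      _ < ε0 := hn₀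
  -- the finite set of possible coefficients
  set D : Finset F := (Finset.univ : Finset (Finset (Fin h) × Finset (Fin h))).image
    (fun p => ∑ i ∈ p.1, c i - ∑ i ∈ p.2, c i) with hDdef
  have hD0 : (0 : F) ∈ D := by
    refine Finset.mem_image.mpr ⟨(∅, ∅), Finset.mem_univ _, by simp⟩
  -- bad sets
  set B : ∀ k : ℕ, (Fin k → V) → Finset V := fun k prev =>
    ((D.erase 0) ×ˢ (Fintype.piFinset fun _ : Fin k => D)).image
      (fun q => (-(q.1)⁻¹) • ∑ j, q.2 j • prev j) with hBdef
  have hpick : ∀ (k : ℕ) (prev : Fin k → V),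
      ∃ x, x ∉ (B k prev : Set V) ∧ N (x - b k) < ε k :=
    fun k prev => avoid _ (B k prev).finite_toSet (b k) (ε k) (hε k)
  set pick : ∀ k : ℕ, (Fin k → V) → V := fun k prev => (hpick k prev).choose with hpickdef
  set a : ℕ → V := buildSeq pick with hadef
  have ha : ∀ k, a k ∉ B k (fun j : Fin k => a j.val) ∧ N (a k - b k) < ε k := by
    intro k
    have hspec := (hpick k (fun j : Fin k => a j.val)).choose_spec
    have heq : a k = pick k (fun j : Fin k => a j.val) := buildSeq_eq pick k
    rw [heq]
    exact ⟨fun hmem => hspec.1 (by simpa using hmem), hspec.2⟩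
  refine ⟨a, ⟨⟨a 0, 0, rfl⟩, ?_⟩, fun k => (ha k).2⟩
  intro x x' hx hx' hsum
  by_contra hne
  -- canonical index of a point in the range of a
  set idx : V → ℕ := fun p => if hp : ∃ n, a n = p then Nat.find hp else 0 with hidxdef
  have hidx : ∀ p (hp : ∃ n, a n = p), a (idx p) = p := by
    intro p hp
    simp only [hidxdef, dif_pos hp]
    exact Nat.find_spec hp
  set κ : Fin h → ℕ := fun i => idx (x i) with hκdef
  set κ' : Fin h → ℕ := fun i => idx (x' i) with hκ'def
  have hκ : ∀ i, a (κ i) = x i := fun i => hidx _ (hx i)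
  have hκ' : ∀ i, a (κ' i) = x' i := fun i => hidx _ (hx' i)
  set P : Finset ℕ := (Finset.univ.image κ) ∪ (Finset.univ.image κ') with hPdef
  set d : ℕ → F := fun n => (∑ i ∈ univ.filter (fun i => κ i = n), c i)
    - (∑ i ∈ univ.filter (fun i => κ' i = n), c i) with hddef
  have hdD : ∀ n, d n ∈ D := by
    intro n
    exact Finset.mem_image.mpr
      ⟨(univ.filter (fun i => κ i = n), univ.filter (fun i => κ' i = n)),
        Finset.mem_univ _, rfl⟩
  -- the linear relation
  have hfib : ∀ (κ₀ : Fin h → ℕ), (∀ i, κ₀ i ∈ P) →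
      ∑ i, c i • a (κ₀ i) =
        ∑ n ∈ P, (∑ i ∈ univ.filter (fun i => κ₀ i = n), c i) • a n := by
    intro κ₀ hmem
    rw [← Finset.sum_fiberwise_of_maps_to (fun i _ => hmem i) (fun i => c i • a (κ₀ i))]
    refine Finset.sum_congr rfl (fun n _ => ?_)
    rw [Finset.sum_smul]
    refine Finset.sum_congr rfl (fun i hi => ?_)
    rw [(Finset.mem_filter.mp hi).2]
  have hrel : ∑ n ∈ P, d n • a n = 0 := by
    have hm1 : ∀ i, κ i ∈ P := fun i =>
      Finset.mem_union_left _ (Finset.mem_image_of_mem κ (Finset.mem_univ i))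
    have hm2 : ∀ i, κ' i ∈ P := fun i =>
      Finset.mem_union_right _ (Finset.mem_image_of_mem κ' (Finset.mem_univ i))
    have h1 := hfib κ hm1
    have h2 := hfib κ' hm2
    have h3 : ∑ i, c i • a (κ i) = ∑ i, c i • a (κ' i) := by
      simp only [hκ, hκ']
      exact hsum
    calc ∑ n ∈ P, d n • a n
        = ∑ n ∈ P, ((∑ i ∈ univ.filter (fun i => κ i = n), c i) • a n
            - (∑ i ∈ univ.filter (fun i => κ' i = n), c i) • a n) := by
          refine Finset.sum_congr rfl (fun n _ => ?_)
          rw [hddef]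
          rw [sub_smul]
      _ = ∑ n ∈ P, (∑ i ∈ univ.filter (fun i => κ i = n), c i) • a n
            - ∑ n ∈ P, (∑ i ∈ univ.filter (fun i => κ' i = n), c i) • a n :=
          Finset.sum_sub_distrib _ _
      _ = 0 := by rw [← h1, ← h2, h3, sub_self]
  -- some coefficient is nonzero
  obtain ⟨i₀, hi₀⟩ : ∃ i, x i ≠ x' i := Function.ne_iff.mp hne
  have hκne : κ' i₀ ≠ κ i₀ := fun hh => hi₀ (by rw [← hκ i₀, ← hκ' i₀, hh])
  have hd0 : d (κ i₀) ≠ 0 := by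
    intro hd
    set I₁ := univ.filter (fun i => κ i = κ i₀) with hI₁
    set I₂ := univ.filter (fun i => κ' i = κ i₀) with hI₂
    have hsubsum : ∑ i ∈ I₁, c i = ∑ i ∈ I₂, c i := sub_eq_zero.mp hd
    apply hN
    refine ⟨I₁ \ I₂, I₂ \ I₁, disjoint_sdiff_sdiff, ?_, ?_⟩
    · rintro ⟨h1, -⟩
      have h1m : i₀ ∈ I₁ := Finset.mem_filter.mpr ⟨Finset.mem_univ _, rfl⟩
      have h2m : i₀ ∉ I₂ := fun hc => hκne (Finset.mem_filter.mp hc).2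
      have hmem : i₀ ∈ I₁ \ I₂ := Finset.mem_sdiff.mpr ⟨h1m, h2m⟩
      rw [h1] at hmem
      exact absurd hmem (Finset.notMem_empty _)
    · have e1 : ∑ i ∈ I₁ ∩ I₂, c i + ∑ i ∈ I₁ \ I₂, c i = ∑ i ∈ I₁, c i :=
        Finset.sum_inter_add_sum_sdiff I₁ I₂ c
      have e2 : ∑ i ∈ I₂ ∩ I₁, c i + ∑ i ∈ I₂ \ I₁, c i = ∑ i ∈ I₂, c i :=
        Finset.sum_inter_add_sum_sdiff I₂ I₁ c
      rw [Finset.inter_comm] at e2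
      linear_combination e1 - e2 + hsubsum
  -- take the largest index with nonzero coefficient
  set Q : Finset ℕ := P.filter (fun n => d n ≠ 0) with hQdef
  have hQne : Q.Nonempty := by
    refine ⟨κ i₀, Finset.mem_filter.mpr ⟨?_, hd0⟩⟩
    exact Finset.mem_union_left _ (Finset.mem_image_of_mem κ (Finset.mem_univ i₀))
  set n' : ℕ := Q.max' hQne with hn'def
  have hn'Q : n' ∈ Q := Q.max'_mem hQne
  have hdn' : d n' ≠ 0 := (Finset.mem_filter.mp hn'Q).2
  have hrelQ : ∑ n ∈ Q, d n • a n = 0 := by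
    rw [← hrel]
    refine Finset.sum_subset (Finset.filter_subset _ _) (fun n hnP hnQ => ?_)
    have : d n = 0 := by
      by_contra hd
      exact hnQ (Finset.mem_filter.mpr ⟨hnP, hd⟩)
    rw [this, zero_smul]
  set e : Fin n' → F := fun j => if j.val ∈ P then d j.val else 0 with hedef
  have heD : ∀ j, e j ∈ D := by
    intro j
    by_cases hj : (j : ℕ) ∈ P
    · simpa [hedef, hj] using hdD (j : ℕ)
    · simp [hedef, hj, hD0]
  have hesum : ∑ j : Fin n', e j • a j.val = ∑ n ∈ Q.erase n', d n • a n := by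
    have h1 : ∑ j : Fin n', e j • a j.val
        = ∑ n ∈ Finset.range n', (if n ∈ P then d n else 0) • a n := by
      rw [Finset.sum_range (fun n => (if n ∈ P then d n else 0) • a n), hedef]
    rw [h1]
    have h2 : ∑ n ∈ Finset.range n', (if n ∈ P then d n else 0) • a n
        = ∑ n ∈ (Finset.range n').filter (fun n => n ∈ P), d n • a n := by
      rw [Finset.sum_filter]
      refine Finset.sum_congr rfl (fun n _ => ?_)
      split <;> simp
    rw [h2]
    symm
    refine Finset.sum_subset ?_ ?_
    · intro n hnQ'
      have hnQ := Finset.mem_of_mem_erase hnQ'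
      have hne' : n ≠ n' := Finset.ne_of_mem_erase hnQ'
      have hle : n ≤ n' := Q.le_max' n hnQ
      have hlt : n < n' := lt_of_le_of_ne hle hne'
      exact Finset.mem_filter.mpr ⟨Finset.mem_range.mpr hlt,
        (Finset.mem_filter.mp hnQ).1⟩
    · intro n hn hn'mem
      have hnP : n ∈ P := (Finset.mem_filter.mp hn).2
      have hlt : n < n' := Finset.mem_range.mp (Finset.mem_filter.mp hn).1
      have : d n = 0 := by
        by_contra hd
        exact hn'mem (Finset.mem_erase.mpr ⟨ne_of_lt hlt,
          Finset.mem_filter.mpr ⟨hnP, hd⟩⟩)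
      rw [this, zero_smul]
  have hkey : a n' = (-(d n')⁻¹) • ∑ j : Fin n', e j • a j.val := by
    have hsplit : d n' • a n' + ∑ n ∈ Q.erase n', d n • a n = 0 := by
      rw [Finset.add_sum_erase Q (fun n => d n • a n) hn'Q]
      exact hrelQ
    rw [hesum]
    have : d n' • a n' = -(∑ n ∈ Q.erase n', d n • a n) :=
      eq_neg_of_add_eq_zero_left hsplit
    calc a n' = (d n')⁻¹ • (d n' • a n') := by
          rw [smul_smul, inv_mul_cancel₀ hdn', one_smul]
      _ = (d n')⁻¹ • (-(∑ n ∈ Q.erase n', d n • a n)) := by rw [this]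
      _ = (-(d n')⁻¹) • ∑ n ∈ Q.erase n', d n • a n := by
          rw [smul_neg, neg_smul]
  have hmemB : a n' ∈ B n' (fun j : Fin n' => a j.val) := by
    rw [hBdef]
    refine Finset.mem_image.mpr ⟨(d n', e), ?_, hkey.symm⟩
    refine Finset.mem_product.mpr ⟨Finset.mem_erase.mpr ⟨hdn', hdD n'⟩, ?_⟩
    exact Fintype.mem_piFinset.mpr heD
  exact (ha n').1 hmemB
end

section
/- Let φ be a linear form with coefficients in a field F with a nontrivial absolute value, satisfying property N, and let V be a normed vector space over F. For every sequence (b_k) of vectors in V there exists a φ-Sidon set A = {a_k : k ≥ 1} in V with lim_{k→∞} ‖a_k − b_k‖ = 0. -/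
open Finset

variable {F : Type*} [Field F] {V : Type*} [AddCommGroup V] [Module F V]

lemma propN_sum_inj {h : ℕ} {c : Fin h → F} (hN : PropN c) {S T : Finset (Fin h)}
    (hST : ∑ i ∈ S, c i = ∑ i ∈ T, c i) : S = T := by
  classical
  by_contra hne
  apply hN
  refine ⟨S \ T, T \ S, disjoint_sdiff_sdiff, ?_, ?_⟩
  · rintro ⟨h1, h2⟩
    exact hne (le_antisymm (sdiff_eq_empty_iff_subset.mp h1) (sdiff_eq_empty_iff_subset.mp h2))
  · have h1 : ∑ i ∈ S ∩ T, c i + ∑ i ∈ S \ T, c i = ∑ i ∈ S, c i :=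
      Finset.sum_inter_add_sum_sdiff S T c
    have h2 : ∑ i ∈ T ∩ S, c i + ∑ i ∈ T \ S, c i = ∑ i ∈ T, c i :=
      Finset.sum_inter_add_sum_sdiff T S c
    rw [Finset.inter_comm] at h2
    exact add_left_cancel (h1.trans (hST.trans h2.symm))

noncomputable def sidonSolve {h : ℕ} (c : Fin h → F) (k : ℕ) (prev : ℕ → V)
    (p : (Fin h → Fin (k + 1)) × (Fin h → Fin (k + 1))) : V :=
  ((∑ i ∈ Finset.univ.filter (fun i => (p.1 i : ℕ) = k), c i) -
      ∑ i ∈ Finset.univ.filter (fun i => (p.2 i : ℕ) = k), c i)⁻¹ •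
    ((∑ i ∈ Finset.univ.filter (fun i => ¬ (p.2 i : ℕ) = k), c i • prev (p.2 i)) -
      ∑ i ∈ Finset.univ.filter (fun i => ¬ (p.1 i : ℕ) = k), c i • prev (p.1 i))

noncomputable def sidonChoose {h : ℕ} (c : Fin h → F) (P : ℕ → V → Prop) : ℕ → ℕ → V
  | 0 => fun _ => 0
  | (k + 1) =>
    Function.update (sidonChoose c P k) k
      (Classical.epsilon fun y : V =>
        P k y ∧ y ∉ Set.range (sidonSolve c k (sidonChoose c P k)))

lemma sidonChoose_spec {h : ℕ} (c : Fin h → F) (P : ℕ → V → Prop) (k : ℕ)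
    (hx : ∃ y : V, P k y ∧ y ∉ Set.range (sidonSolve c k (sidonChoose c P k))) :
    P k (sidonChoose c P (k + 1) k) ∧
      sidonChoose c P (k + 1) k ∉ Set.range (sidonSolve c k (sidonChoose c P k)) := by
  have heq : sidonChoose c P (k + 1) k
      = Classical.epsilon fun y : V =>
          P k y ∧ y ∉ Set.range (sidonSolve c k (sidonChoose c P k)) := by
    simp [sidonChoose, Function.update]
  rw [heq]
  exact Classical.epsilon_spec hx

lemma sidonChoose_agree {h : ℕ} (c : Fin h → F) (P : ℕ → V → Prop) :
    ∀ k m : ℕ, m < k → sidonChoose c P k m = sidonChoose c P (m + 1) m := by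
  intro k
  induction k with
  | zero => intro m hm; omega
  | succ k ih =>
    intro m hm
    rcases Nat.lt_succ_iff_lt_or_eq.mp hm with hm' | rfl
    · rw [← ih m hm']
      show Function.update (sidonChoose c P k) k _ m = _
      rw [Function.update_of_ne (by omega)]
    · rfl

open Filter Topology in
theorem sidon_asymptotic {F : Type*} [Field F]
    {V : Type*} [AddCommGroup V] [Module F V]
    (v : AbsoluteValue F ℝ) (hv : ∃ c : F, c ≠ 0 ∧ v c ≠ 1)
    (N : V → ℝ) (hN0 : ∀ x : V, N x = 0 ↔ x = 0)
    (hNs : ∀ (a : F) (x : V), N (a • x) = v a * N x)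
    (hNt : ∀ x y : V, N (x + y) ≤ N x + N y)
    {h : ℕ} (c : Fin h → F) (hN : PropN c) (b : ℕ → V) :
    ∃ a : ℕ → V, IsSidonSet c (Set.range a) ∧
      Tendsto (fun k => N (a k - b k)) atTop (nhds 0) := by
  classical
  have hN0' : N 0 = 0 := (hN0 0).2 rfl
  have hNneg : ∀ x : V, N (-x) = N x := by
    intro x
    have h1 : N ((-1 : F) • x) = v (-1) * N x := hNs (-1) x
    rw [neg_one_smul, v.map_neg, v.map_one, one_mul] at h1
    exact h1
  have hNnonneg : ∀ x : V, 0 ≤ N x := by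
    intro x
    have h1 := hNt x (-x)
    rw [add_neg_cancel, hN0', hNneg] at h1
    linarith
  by_cases hV : ∀ x : V, x = 0
  · refine ⟨b, ⟨⟨b 0, 0, rfl⟩, ?_⟩, ?_⟩
    · intro a a' _ _ _
      funext i; rw [hV (a i), hV (a' i)]
    · simpa [sub_self, hN0'] using
        (tendsto_const_nhds : Tendsto (fun _ : ℕ => (0:ℝ)) atTop (nhds 0))
  push_neg at hV
  obtain ⟨v0, hv0⟩ := hV
  obtain ⟨c0, hc0ne, hc0lt⟩ : ∃ c0 : F, c0 ≠ 0 ∧ v c0 < 1 := by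
    obtain ⟨e, he0, he1⟩ := hv
    rcases lt_or_gt_of_ne he1 with hlt | hgt
    · exact ⟨e, he0, hlt⟩
    · refine ⟨e⁻¹, inv_ne_zero he0, ?_⟩
      rw [map_inv₀]
      exact inv_lt_one_of_one_lt₀ hgt
  have hc0pos : 0 < v c0 := v.pos hc0ne
  have hv0N : 0 < N v0 := lt_of_le_of_ne (hNnonneg v0) (fun hh => hv0 ((hN0 v0).1 hh.symm))
  -- the candidate points
  set x : ℕ → ℕ → V := fun k n => b k + c0 ^ n • v0 with hxdef
  have hxinj : ∀ k, Function.Injective (x k) := by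
    intro k n m hnm
    by_contra hne
    have hsmul : c0 ^ n • v0 = c0 ^ m • v0 := by
      have := hnm
      simp only [hxdef, add_right_inj] at this
      exact this
    have hs : c0 ^ n - c0 ^ m ≠ 0 := by
      rw [sub_ne_zero]
      intro hpow
      have hvv : (v c0) ^ n = (v c0) ^ m := by
        rw [← map_pow, ← map_pow, hpow]
      rcases Nat.lt_or_ge n m with hlt | hge
      · exact absurd hvv (ne_of_gt (pow_lt_pow_right_of_lt_one₀ hc0pos hc0lt hlt))
      · have hlt' : m < n := by omega
        exact absurd hvv (ne_of_lt (pow_lt_pow_right_of_lt_one₀ hc0pos hc0lt hlt'))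
    have hz : (c0 ^ n - c0 ^ m) • v0 = 0 := by
      rw [sub_smul, hsmul, sub_self]
    have := congrArg (fun w => (c0 ^ n - c0 ^ m)⁻¹ • w) hz
    simp only [smul_smul, inv_mul_cancel₀ hs, one_smul, smul_zero] at this
    exact hv0 this
  set P : ℕ → V → Prop := fun k y => ∃ n : ℕ, k ≤ n ∧ y = x k n with hPdef
  set q : ℕ → ℕ → V := sidonChoose c P with hqdef
  set a : ℕ → V := fun k => q (k + 1) k with hadef
  have hagree : ∀ k m, m < k → q k m = a m := fun k m hm => sidonChoose_agree c P k m hm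
  have hex : ∀ k, ∃ y : V, P k y ∧ y ∉ Set.range (sidonSolve c k (q k)) := by
    intro k
    have hfin : (Set.range (sidonSolve c k (q k))).Finite := Set.finite_range _
    have hpre : {n : ℕ | x k n ∈ Set.range (sidonSolve c k (q k))}.Finite :=
      hfin.preimage ((hxinj k).injOn)
    have hcof : (Set.Iio k ∪ {n : ℕ | x k n ∈ Set.range (sidonSolve c k (q k))}).Finite :=
      (Set.finite_Iio k).union hpre
    obtain ⟨n, hn⟩ := hcof.infinite_compl.nonempty
    rw [Set.mem_compl_iff, Set.mem_union, not_or] at hn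
    exact ⟨x k n, ⟨n, not_lt.mp hn.1, rfl⟩, hn.2⟩
  have hspec : ∀ k, P k (a k) ∧ a k ∉ Set.range (sidonSolve c k (q k)) :=
    fun k => sidonChoose_spec c P k (hex k)
  -- the splitting lemma
  have hsplit : ∀ (K : ℕ) (f : Fin h → ℕ),
      ∑ i, c i • a (f i) =
        (∑ i ∈ univ.filter (fun i => f i = K), c i) • a K +
          ∑ i ∈ univ.filter (fun i => ¬ f i = K), c i • a (f i) := by
    intro K f
    rw [← Finset.sum_filter_add_sum_filter_not univ (fun i => f i = K)
      (fun i => c i • a (f i))]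
    congr 1
    rw [Finset.sum_smul]
    exact Finset.sum_congr rfl fun i hi => by rw [(Finset.mem_filter.mp hi).2]
  have hsplit0 : ∀ (K : ℕ) (f : Fin h → ℕ),
      ∑ i, c i • a ((fun i => if f i = K then 0 else f i) i) =
        (∑ i ∈ univ.filter (fun i => f i = K), c i) • a 0 +
          ∑ i ∈ univ.filter (fun i => ¬ f i = K), c i • a (f i) := by
    intro K f
    rw [← Finset.sum_filter_add_sum_filter_not univ (fun i => f i = K)
      (fun i => c i • a (if f i = K then 0 else f i))]
    congr 1
    · rw [Finset.sum_smul]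
      exact Finset.sum_congr rfl fun i hi => by rw [if_pos (Finset.mem_filter.mp hi).2]
    · exact Finset.sum_congr rfl fun i hi => by rw [if_neg (Finset.mem_filter.mp hi).2]
  -- the key inductive property
  have Q : ∀ K (f g : Fin h → ℕ), (∀ i, f i < K) → (∀ i, g i < K) →
      (∑ i, c i • a (f i)) = (∑ i, c i • a (g i)) → f = g := by
    intro K
    induction K with
    | zero => intro f g hf _ _; funext i; exact absurd (hf i) (Nat.not_lt_zero _)
    | succ K ih =>
      intro f g hf hg heq
      rcases Nat.eq_zero_or_pos K with rfl | hKpos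
      · funext i; have := hf i; have := hg i; omega
      rw [hsplit K f, hsplit K g] at heq
      by_cases hST : univ.filter (fun i => f i = K) = univ.filter (fun i => g i = K)
      · -- reduce to smaller K
        have hR : ∑ i ∈ univ.filter (fun i => ¬ f i = K), c i • a (f i)
            = ∑ i ∈ univ.filter (fun i => ¬ g i = K), c i • a (g i) := by
          rw [hST] at heq
          exact add_left_cancel heq
        have hsum' : (∑ i, c i • a ((fun i => if f i = K then 0 else f i) i))
            = ∑ i, c i • a ((fun i => if g i = K then 0 else g i) i) := by
          rw [hsplit0 K f, hsplit0 K g, hST, hR]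
        have hfg' : (fun i => if f i = K then 0 else f i)
            = (fun i => if g i = K then 0 else g i) := by
          apply ih _ _ ?_ ?_ hsum'
          · intro i; split
            · exact hKpos
            · have := hf i; omega
          · intro i; split
            · exact hKpos
            · have := hg i; omega
        funext i
        by_cases hik : f i = K
        · have hmem : i ∈ univ.filter (fun i => g i = K) := by
            rw [← hST]; exact Finset.mem_filter.mpr ⟨Finset.mem_univ i, hik⟩
          rw [hik, (Finset.mem_filter.mp hmem).2]
        · have hgi : ¬ g i = K := by
            intro hgk
            have hmem : i ∈ univ.filter (fun i => f i = K) := by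
              rw [hST]; exact Finset.mem_filter.mpr ⟨Finset.mem_univ i, hgk⟩
            exact hik (Finset.mem_filter.mp hmem).2
          have := congrFun hfg' i
          simpa [if_neg hik, if_neg hgi] using this
      · -- contradiction with the choice of a K
        exfalso
        have hd : (∑ i ∈ univ.filter (fun i => f i = K), c i)
            - (∑ i ∈ univ.filter (fun i => g i = K), c i) ≠ 0 :=
          sub_ne_zero.mpr fun hh => hST (propN_sum_inj hN hh)
        have hkey : ((∑ i ∈ univ.filter (fun i => f i = K), c i)
              - (∑ i ∈ univ.filter (fun i => g i = K), c i)) • a K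
            = (∑ i ∈ univ.filter (fun i => ¬ g i = K), c i • a (g i))
              - ∑ i ∈ univ.filter (fun i => ¬ f i = K), c i • a (f i) := by
          rw [sub_smul, sub_eq_sub_iff_add_eq_add, heq, add_comm]
        have haK : a K
            = ((∑ i ∈ univ.filter (fun i => f i = K), c i)
                - (∑ i ∈ univ.filter (fun i => g i = K), c i))⁻¹ •
              ((∑ i ∈ univ.filter (fun i => ¬ g i = K), c i • a (g i))
                - ∑ i ∈ univ.filter (fun i => ¬ f i = K), c i • a (f i)) := by
          rw [← hkey, smul_smul, inv_mul_cancel₀ hd, one_smul]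
        apply (hspec K).2
        refine ⟨⟨fun i => ⟨f i, hf i⟩, fun i => ⟨g i, hg i⟩⟩, ?_⟩
        show ((∑ i ∈ univ.filter (fun i => f i = K), c i)
              - ∑ i ∈ univ.filter (fun i => g i = K), c i)⁻¹ •
            ((∑ i ∈ univ.filter (fun i => ¬ g i = K), c i • q K (g i))
              - ∑ i ∈ univ.filter (fun i => ¬ f i = K), c i • q K (f i)) = a K
        have e1 : ∑ i ∈ univ.filter (fun i => ¬ g i = K), c i • q K (g i)
            = ∑ i ∈ univ.filter (fun i => ¬ g i = K), c i • a (g i) :=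
          Finset.sum_congr rfl fun i hi => by
            rw [hagree K (g i)
              (by have := hg i; have := (Finset.mem_filter.mp hi).2; omega)]
        have e2 : ∑ i ∈ univ.filter (fun i => ¬ f i = K), c i • q K (f i)
            = ∑ i ∈ univ.filter (fun i => ¬ f i = K), c i • a (f i) :=
          Finset.sum_congr rfl fun i hi => by
            rw [hagree K (f i)
              (by have := hf i; have := (Finset.mem_filter.mp hi).2; omega)]
        rw [e1, e2]
        exact haK.symm
  refine ⟨a, ⟨⟨a 0, 0, rfl⟩, ?_⟩, ?_⟩
  · intro α α' hα hα' hsum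
    choose f hfa using hα
    choose g hga using hα'
    set K : ℕ := (univ.sup f ⊔ univ.sup g) + 1 with hK
    have hfK : ∀ i, f i < K := fun i =>
      Nat.lt_succ_of_le (le_trans (Finset.le_sup (Finset.mem_univ i)) le_sup_left)
    have hgK : ∀ i, g i < K := fun i =>
      Nat.lt_succ_of_le (le_trans (Finset.le_sup (Finset.mem_univ i)) le_sup_right)
    have hsum' : (∑ i, c i • a (f i)) = ∑ i, c i • a (g i) := by
      calc (∑ i, c i • a (f i)) = ∑ i, c i • α i :=
            Finset.sum_congr rfl fun i _ => by rw [hfa i]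
        _ = ∑ i, c i • α' i := hsum
        _ = ∑ i, c i • a (g i) := (Finset.sum_congr rfl fun i _ => by rw [hga i]).symm
    have hfg := Q K f g hfK hgK hsum'
    funext i
    rw [← hfa i, ← hga i, hfg]
  · have hbound : ∀ k, N (a k - b k) ≤ (v c0) ^ k * N v0 := by
      intro k
      obtain ⟨n, hkn, hxn⟩ := (hspec k).1
      rw [hxn]
      have : x k n - b k = c0 ^ n • v0 := by simp [hxdef]
      rw [this, hNs, map_pow]
      exact mul_le_mul_of_nonneg_right
        (pow_le_pow_of_le_one hc0pos.le hc0lt.le hkn) (hNnonneg v0)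
    have hlim : Tendsto (fun k : ℕ => (v c0) ^ k * N v0) atTop (nhds 0) := by
      simpa using (tendsto_pow_atTop_nhds_zero_of_lt_one hc0pos.le hc0lt).mul_const (N v0)
    exact squeeze_zero (fun k => hNnonneg _) hbound hlim
end

section
/- Let φ be a linear form with rational coefficients satisfying property N, P₀ a nonempty finite set of primes, A' a finite set of integers, and b an integer. For every ε > 0 there are infinitely many positive integers a with |a − b|_p < ε for all p ∈ P₀ such that the sets Φ_J(A',a), for all J ⊆ {1,…,h}, are pairwise disjoint. -/
open Finset

variable {F : Type*} [Field F] {V : Type*} [AddCommGroup V] [Module F V]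

/-! By property N the sums `s_J = ∑_{j ∈ Jᶜ} c_j` are pairwise distinct, so a common point of
`Φ_{J₁}(A', a)` and `Φ_{J₂}(A', a)` forces `a = (u₁ - u₂) / (s_{J₂} - s_{J₁})` with
`uᵢ ∈ φ_{Jᵢ}(A')`: only finitely many `a` are bad. The progression `a ≡ b mod ∏_{p ∈ P₀} p^k`
contains infinitely many positive integers, all `p`-adically within `2^{-k}` of `b`; removing
the bad ones leaves infinitely many. -/

open scoped Pointwise

/-- `φ_J(A) = {∑_{j ∈ J} c_j a_j : a_j ∈ A}`. -/
def phiJ {h : ℕ} (c : Fin h → F) (J : Finset (Fin h)) (A : Set V) : Set V :=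
  {w | ∃ f : Fin h → V, (∀ j ∈ J, f j ∈ A) ∧ w = ∑ j ∈ J, c j • f j}

theorem PropN.sum_injective {h : ℕ} {c : Fin h → F} (hN : PropN c) :
    Function.Injective fun J : Finset (Fin h) => ∑ j ∈ J, c j := by
  intro J₁ J₂ heq
  by_contra hne
  refine hN ⟨J₁ \ J₂, J₂ \ J₁, disjoint_sdiff_sdiff, fun ⟨h₁, h₂⟩ => hne ?_, ?_⟩
  · exact Subset.antisymm (sdiff_eq_empty_iff_subset.mp h₁) (sdiff_eq_empty_iff_subset.mp h₂)
  · have e₁ := sum_inter_add_sum_sdiff J₁ J₂ c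
    have e₂ := sum_inter_add_sum_sdiff J₂ J₁ c
    rw [inter_comm] at e₂
    simp only at heq
    linear_combination e₁ - e₂ + heq

theorem mem_PhiJ_iff {h : ℕ} {c : Fin h → F} {J : Finset (Fin h)} {A : Set V} {b w : V} :
    w ∈ PhiJ c J A b ↔ w - (∑ j ∈ Jᶜ, c j) • b ∈ phiJ c J A := by
  simp only [PhiJ, phiJ, Set.mem_ofPred_eq, sub_eq_iff_eq_add]

theorem phiJ_finite {h : ℕ} (c : Fin h → F) (J : Finset (Fin h)) {A : Set V} (hA : A.Finite) :
    (phiJ c J A).Finite := by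
  classical
  refine ((Set.Finite.pi fun _ => hA.insert 0).image
    fun f : Fin h → V => ∑ j ∈ J, c j • f j).subset ?_
  rintro w ⟨f, hf, rfl⟩
  refine ⟨fun j => if j ∈ J then f j else 0, fun j _ => ?_, sum_congr rfl fun j hj => by simp [hj]⟩
  by_cases hj : j ∈ J <;> simp [hj, hf]

theorem smul_mem_phiJ_sub_of_not_disjoint {h : ℕ} {c : Fin h → F} {J₁ J₂ : Finset (Fin h)}
    {A : Set V} {b : V} (hb : ¬ Disjoint (PhiJ c J₁ A b) (PhiJ c J₂ A b)) :
    (∑ j ∈ J₂ᶜ, c j - ∑ j ∈ J₁ᶜ, c j) • b ∈ phiJ c J₁ A - phiJ c J₂ A := by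
  obtain ⟨w, hw₁, hw₂⟩ := Set.not_disjoint_iff.mp hb
  exact ⟨_, mem_PhiJ_iff.mp hw₁, _, mem_PhiJ_iff.mp hw₂,
    (sub_sub_sub_cancel_left _ _ _).trans (sub_smul _ _ _).symm⟩

theorem finite_setOf_not_disjoint_PhiJ {h : ℕ} {c : Fin h → F} {J₁ J₂ : Finset (Fin h)}
    (hJ : ∑ j ∈ J₁ᶜ, c j ≠ ∑ j ∈ J₂ᶜ, c j) {A : Set V} (hA : A.Finite) :
    {b : V | ¬ Disjoint (PhiJ c J₁ A b) (PhiJ c J₂ A b)}.Finite := by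
  refine (((phiJ_finite c J₁ hA).sub (phiJ_finite c J₂ hA)).smul_set
    (a := (∑ j ∈ J₂ᶜ, c j - ∑ j ∈ J₁ᶜ, c j)⁻¹)).subset fun b hb => ?_
  refine ⟨_, smul_mem_phiJ_sub_of_not_disjoint hb, ?_⟩
  simp only [smul_smul, inv_mul_cancel₀ (sub_ne_zero.mpr hJ.symm), one_smul]

theorem PropN.finite_setOf_exists_not_disjoint_PhiJ {h : ℕ} {c : Fin h → F} (hN : PropN c)
    {A : Set V} (hA : A.Finite) :
    {b : V | ∃ J₁ J₂ : Finset (Fin h), J₁ ≠ J₂ ∧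
      ¬ Disjoint (PhiJ c J₁ A b) (PhiJ c J₂ A b)}.Finite := by
  have hsplit : {b : V | ∃ J₁ J₂ : Finset (Fin h), J₁ ≠ J₂ ∧
      ¬ Disjoint (PhiJ c J₁ A b) (PhiJ c J₂ A b)} =
      ⋃ J₁, ⋃ J₂, ⋃ (_ : J₁ ≠ J₂), {b | ¬ Disjoint (PhiJ c J₁ A b) (PhiJ c J₂ A b)} := by
    ext; simp
  rw [hsplit]
  exact Set.finite_iUnion fun J₁ => Set.finite_iUnion fun J₂ => Set.finite_iUnion fun hne =>
    finite_setOf_not_disjoint_PhiJ (hN.sum_injective.ne (compl_injective.ne hne)) hA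

theorem padicNorm_le_inv_two_pow_of_dvd {p k : ℕ} (hp : p.Prime) {z : ℤ}
    (hz : (p : ℤ) ^ k ∣ z) : padicNorm p z ≤ 2⁻¹ ^ k := by
  have : Fact p.Prime := ⟨hp⟩
  calc padicNorm p z ≤ (p : ℚ) ^ (-k : ℤ) := padicNorm.dvd_iff_norm_le.mp (by exact_mod_cast hz)
    _ = (p : ℚ)⁻¹ ^ k := by rw [zpow_neg, zpow_natCast, inv_pow]
    _ ≤ 2⁻¹ ^ k := by
      gcongr
      exact_mod_cast hp.two_le

theorem infinite_setOf_pos_dvd_sub {M : ℕ} (hM : 0 < M) (b : ℤ) :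
    {a : ℕ | 0 < a ∧ (M : ℤ) ∣ a - b}.Infinite := by
  refine Set.infinite_of_forall_exists_gt fun n => ?_
  obtain ⟨m, hmt, hMm⟩ : ∃ m : ℤ, (b.natAbs + n + 1 : ℤ) ≤ m ∧ (M : ℤ) ∣ m :=
    ⟨M * (b.natAbs + n + 1), le_mul_of_one_le_left (by positivity) (by exact_mod_cast hM),
      dvd_mul_right _ _⟩
  refine ⟨(b + m).toNat, ⟨by omega, ?_⟩, by omega⟩
  rwa [Int.toNat_of_nonneg (by omega), add_sub_cancel_left]

theorem padic_perturbation_PhiJ_disjoint_general {h : ℕ} (c : Fin h → ℚ) (hN : PropN c)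
    (P₀ : Finset ℕ) (hP₀p : ∀ p ∈ P₀, p.Prime)
    (A' : Finset ℤ) (b : ℤ) (ε : ℝ) (hε : 0 < ε) :
    {a : ℕ | 0 < a ∧ (∀ p ∈ P₀, ((padicNorm p ((a : ℚ) - (b : ℚ))) : ℝ) < ε) ∧
      ∀ J₁ J₂ : Finset (Fin h), J₁ ≠ J₂ →
        Disjoint (PhiJ c J₁ ((fun n : ℤ => (n : ℚ)) '' ↑A') (a : ℚ))
                 (PhiJ c J₂ ((fun n : ℤ => (n : ℚ)) '' ↑A') (a : ℚ))}.Infinite := by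
  obtain ⟨k, hk⟩ : ∃ k : ℕ, ((2 : ℝ)⁻¹) ^ k < ε := exists_pow_lt_of_lt_one hε (by norm_num)
  have hM : 0 < ∏ p ∈ P₀, p ^ k := prod_pos fun p hp => pow_pos (hP₀p p hp).pos k
  have hbad := (hN.finite_setOf_exists_not_disjoint_PhiJ (A'.finite_toSet.image
    fun n : ℤ => (n : ℚ))).preimage (Nat.cast_injective (R := ℚ)).injOn
  refine ((infinite_setOf_pos_dvd_sub hM b).sdiff hbad).mono ?_
  rintro a ⟨⟨ha, hdvd⟩, hgood⟩
  refine ⟨ha, fun p hp => ?_, fun J₁ J₂ hne => not_not.mp fun hJ => hgood ⟨J₁, J₂, hne, hJ⟩⟩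
  have hpM : (p : ℤ) ^ k ∣ a - b := dvd_trans (by exact_mod_cast dvd_prod_of_mem (· ^ k) hp) hdvd
  calc ((padicNorm p ((a : ℚ) - b) : ℚ) : ℝ) ≤ ((2⁻¹ ^ k : ℚ) : ℝ) := by
        exact_mod_cast padicNorm_le_inv_two_pow_of_dvd (hP₀p p hp) hpM
    _ < ε := by push_cast; exact hk

theorem padic_perturbation_PhiJ_disjoint {h : ℕ} (c : Fin h → ℚ) (hN : PropN c)
    (P₀ : Finset ℕ) (hP₀ : P₀.Nonempty) (hP₀p : ∀ p ∈ P₀, p.Prime)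
    (A' : Finset ℤ) (b : ℤ) (ε : ℝ) (hε : 0 < ε) :
    {a : ℕ | 0 < a ∧ (∀ p ∈ P₀, ((padicNorm p ((a : ℚ) - (b : ℚ))) : ℝ) < ε) ∧
      ∀ J₁ J₂ : Finset (Fin h), J₁ ≠ J₂ →
        Disjoint (PhiJ c J₁ ((fun n : ℤ => (n : ℚ)) '' ↑A') (a : ℚ))
                 (PhiJ c J₂ ((fun n : ℤ => (n : ℚ)) '' ↑A') (a : ℚ))}.Infinite :=
  padic_perturbation_PhiJ_disjoint_general c hN P₀ hP₀p A' b ε hε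
end

section
/- Let φ be a linear form with rational coefficients satisfying property N, (ε_k) a sequence of positive reals, (p_k) a sequence of primes, and (b_k) a sequence of integers. Then there exists a strictly increasing sequence of positive integers (a_k) whose set of terms is a φ-Sidon set and such that |a_k − b_k|_{p_j} < ε_k for all k ≥ 1 and all j ∈ {1,…,k}. -/
open Finset

variable {F : Type*} [Field F] {V : Type*} [AddCommGroup V] [Module F V]

noncomputable section Lemmas


/-- Sum of absolute values of coefficients. -/
def Cbound {h : ℕ} (c : Fin h → ℚ) : ℚ := ∑ i, |c i|

/-- Set of nonzero differences of subset sums. -/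
def Dset {h : ℕ} (c : Fin h → ℚ) : Finset ℚ :=
  ((Finset.univ : Finset (Finset (Fin h) × Finset (Fin h))).image
    fun P => (∑ i ∈ P.1, c i) - ∑ i ∈ P.2, c i).filter (· ≠ 0)

def del {h : ℕ} (c : Fin h → ℚ) : ℚ :=
  if hD : (Dset c).Nonempty then (Dset c).inf' hD abs else 1

lemma Cbound_nonneg {h : ℕ} (c : Fin h → ℚ) : 0 ≤ Cbound c :=
  Finset.sum_nonneg fun i _ => abs_nonneg _

lemma del_pos {h : ℕ} (c : Fin h → ℚ) : 0 < del c := by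
  unfold del
  split_ifs with hD
  · obtain ⟨d, hd, hde⟩ := Finset.exists_mem_eq_inf' hD abs
    rw [hde]
    have : d ≠ 0 := (Finset.mem_filter.mp hd).2
    exact abs_pos.mpr this
  · norm_num

lemma del_le {h : ℕ} (c : Fin h → ℚ) (I₁ I₂ : Finset (Fin h))
    (hne : (∑ i ∈ I₁, c i) - ∑ i ∈ I₂, c i ≠ 0) :
    del c ≤ |(∑ i ∈ I₁, c i) - ∑ i ∈ I₂, c i| := by
  have hmem : ((∑ i ∈ I₁, c i) - ∑ i ∈ I₂, c i) ∈ Dset c := by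
    refine Finset.mem_filter.mpr ⟨Finset.mem_image.mpr ⟨(I₁, I₂), Finset.mem_univ _, rfl⟩, hne⟩
  have hD : (Dset c).Nonempty := ⟨_, hmem⟩
  rw [del, dif_pos hD]
  exact Finset.inf'_le _ hmem

def Kgrow {h : ℕ} (c : Fin h → ℚ) : ℕ := ⌈(4 * h * Cbound c) / del c⌉₊ + 1

lemma Kgrow_pos {h : ℕ} (c : Fin h → ℚ) : 1 ≤ Kgrow c := Nat.le_add_left 1 _

lemma Kgrow_spec {h : ℕ} (c : Fin h → ℚ) {x y : ℚ} (hx : 0 ≤ x)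
    (hy : (Kgrow c : ℚ) * x < y) :
    4 * h * Cbound c * x < del c * y := by
  have hδ := del_pos c
  have h1 : (4 * h * Cbound c) / del c ≤ (Kgrow c : ℚ) := by
    calc (4 * h * Cbound c) / del c ≤ (⌈(4 * h * Cbound c) / del c⌉₊ : ℚ) := Nat.le_ceil _
    _ ≤ (Kgrow c : ℚ) := by rw [Kgrow]; push_cast; linarith
  have h2 : 4 * h * Cbound c ≤ del c * Kgrow c := by
    rw [div_le_iff₀ hδ] at h1; linarith
  calc 4 * h * Cbound c * x ≤ del c * Kgrow c * x := mul_le_mul_of_nonneg_right h2 hx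
    _ = del c * ((Kgrow c : ℚ) * x) := by ring
    _ < del c * y := by exact mul_lt_mul_of_pos_left hy hδ

/-- Fibers of `s` and `t` over `n` having equal coefficient sums forces them equal,
given property N. -/
lemma fiber_eq {h : ℕ} {c : Fin h → ℚ} (hN : PropN c) (s t : Fin h → ℕ) (n : ℕ)
    (hS : (∑ i ∈ univ.filter (fun i => s i = n), c i)
        = ∑ i ∈ univ.filter (fun i => t i = n), c i) :
    univ.filter (fun i => s i = n) = univ.filter (fun i => t i = n) := by
  set I₁ : Finset (Fin h) := univ.filter (fun i => s i = n ∧ ¬ t i = n) with hI₁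
  set I₂ : Finset (Fin h) := univ.filter (fun i => t i = n ∧ ¬ s i = n) with hI₂
  have hdisj : Disjoint I₁ I₂ := by
    rw [Finset.disjoint_left]
    intro i hi1 hi2
    simp only [hI₁, hI₂, Finset.mem_filter] at hi1 hi2
    exact hi1.2.2 hi2.2.1
  have hsplit1 : (∑ i ∈ univ.filter (fun i => s i = n ∧ t i = n), c i) + ∑ i ∈ I₁, c i
      = ∑ i ∈ univ.filter (fun i => s i = n), c i := by
    rw [hI₁, ← Finset.filter_filter, ← Finset.filter_filter]
    exact Finset.sum_filter_add_sum_filter_not _ _ _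
  have hsplit2 : (∑ i ∈ univ.filter (fun i => s i = n ∧ t i = n), c i) + ∑ i ∈ I₂, c i
      = ∑ i ∈ univ.filter (fun i => t i = n), c i := by
    have : univ.filter (fun i => s i = n ∧ t i = n)
        = univ.filter (fun i => t i = n ∧ s i = n) := by
      apply Finset.filter_congr; intro i _; exact and_comm
    rw [this, hI₂, ← Finset.filter_filter, ← Finset.filter_filter]
    exact Finset.sum_filter_add_sum_filter_not _ _ _
  have hsum : (∑ i ∈ I₁, c i) = ∑ i ∈ I₂, c i := by linarith [hsplit1, hsplit2, hS]
  have hempty : I₁ = ∅ ∧ I₂ = ∅ := by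
    by_contra hne
    exact hN ⟨I₁, I₂, hdisj, hne, hsum⟩
  ext i
  simp only [Finset.mem_filter, Finset.mem_univ, true_and]
  constructor
  · intro hs
    by_contra ht
    have : i ∈ I₁ := by simp [hI₁, hs, ht]
    rw [hempty.1] at this; exact absurd this (Finset.notMem_empty i)
  · intro ht
    by_contra hs
    have : i ∈ I₂ := by simp [hI₂, ht, hs]
    rw [hempty.2] at this; exact absurd this (Finset.notMem_empty i)



/-- Recursive sequence: each term is `b k` plus a positive multiple of `Q k`,
large enough to exceed `K` times the previous term. -/
def seqA (b : ℕ → ℤ) (Q : ℕ → ℤ) (K : ℕ) : ℕ → ℤ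
  | 0 => b 0 + (max 0 (1 - b 0) + 1) * Q 0
  | (k+1) => b (k+1) + (max 0 ((K : ℤ) * seqA b Q K k + 1 - b (k+1)) + 1) * Q (k+1)

lemma seqA_sub_dvd (b : ℕ → ℤ) (Q : ℕ → ℤ) (K : ℕ) (k : ℕ) :
    Q k ∣ seqA b Q K k - b k := by
  cases k with
  | zero => simp [seqA]
  | succ n => simp [seqA]


lemma seqA_zero_pos (b : ℕ → ℤ) (Q : ℕ → ℤ) (K : ℕ) (hQ : ∀ k, 1 ≤ Q k) :
    0 < seqA b Q K 0 := by
  have h1 : (1:ℤ) - b 0 ≤ max 0 (1 - b 0) := le_max_right _ _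
  have hm : (0:ℤ) ≤ max 0 (1 - b 0) + 1 := by positivity
  have h2 : max 0 (1 - b 0) + 1 ≤ (max 0 (1 - b 0) + 1) * Q 0 :=
    le_mul_of_one_le_right hm (hQ 0)
  simp only [seqA]
  omega

lemma seqA_succ_gt (b : ℕ → ℤ) (Q : ℕ → ℤ) (K : ℕ) (hQ : ∀ k, 1 ≤ Q k) (k : ℕ) :
    (K : ℤ) * seqA b Q K k < seqA b Q K (k+1) := by
  have h1 : (K : ℤ) * seqA b Q K k + 1 - b (k+1)
      ≤ max 0 ((K : ℤ) * seqA b Q K k + 1 - b (k+1)) := le_max_right _ _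
  have hm : (0:ℤ) ≤ max 0 ((K : ℤ) * seqA b Q K k + 1 - b (k+1)) + 1 := by positivity
  have h2 : max 0 ((K : ℤ) * seqA b Q K k + 1 - b (k+1)) + 1
      ≤ (max 0 ((K : ℤ) * seqA b Q K k + 1 - b (k+1)) + 1) * Q (k+1) :=
    le_mul_of_one_le_right hm (hQ (k+1))
  conv_rhs => rw [seqA]
  omega

lemma seqA_pos (b : ℕ → ℤ) (Q : ℕ → ℤ) (K : ℕ) (hQ : ∀ k, 1 ≤ Q k) (hK : 1 ≤ K) (k : ℕ) :
    0 < seqA b Q K k := by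
  induction k with
  | zero => exact seqA_zero_pos b Q K hQ
  | succ n ih =>
    have := seqA_succ_gt b Q K hQ n
    have hKb : (1:ℤ) ≤ (K:ℤ) := by exact_mod_cast hK
    nlinarith

lemma seqA_strictMono (b : ℕ → ℤ) (Q : ℕ → ℤ) (K : ℕ) (hQ : ∀ k, 1 ≤ Q k) (hK : 1 ≤ K) :
    StrictMono (seqA b Q K) := by
  apply strictMono_nat_of_lt_succ
  intro n
  have h1 := seqA_succ_gt b Q K hQ n
  have h2 := seqA_pos b Q K hQ hK n
  have hKb : (1:ℤ) ≤ (K:ℤ) := by exact_mod_cast hK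
  nlinarith



lemma padic_bound (q : ℕ) (hq : q.Prime) (n : ℕ) (z : ℤ) (hdvd : ((q:ℤ) ^ n) ∣ z) :
    ((padicNorm q (z : ℚ)) : ℝ) ≤ (1/2 : ℝ) ^ n := by
  haveI : Fact q.Prime := ⟨hq⟩
  have h1 : padicNorm q (z : ℚ) ≤ (q : ℚ) ^ (-n : ℤ) := by
    rw [← padicNorm.dvd_iff_norm_le]
    exact_mod_cast hdvd
  have hq2 : (2:ℚ) ≤ (q:ℚ) := by exact_mod_cast hq.two_le
  have h2 : (q : ℚ) ^ (-n : ℤ) ≤ (1/2 : ℚ) ^ n := by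
    rw [zpow_neg, zpow_natCast]
    rw [one_div, inv_pow]
    apply inv_anti₀ (by positivity)
    exact pow_le_pow_left₀ (by norm_num) hq2 n
  have := h1.trans h2
  calc ((padicNorm q (z : ℚ)) : ℝ) ≤ (((1/2 : ℚ) ^ n : ℚ) : ℝ) := by exact_mod_cast this
    _ = (1/2 : ℝ) ^ n := by push_cast; ring

lemma abs_fiber_sum_le {h : ℕ} (c : Fin h → ℚ) (F : Finset (Fin h)) :
    |∑ i ∈ F, c i| ≤ Cbound c := by
  calc |∑ i ∈ F, c i| ≤ ∑ i ∈ F, |c i| := Finset.abs_sum_le_sum_abs _ _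
    _ ≤ ∑ i, |c i| :=
      Finset.sum_le_sum_of_subset_of_nonneg (Finset.subset_univ F)
        (fun i _ _ => abs_nonneg _)
    _ = Cbound c := rfl

lemma sidon_of_growth {h : ℕ} (c : Fin h → ℚ) (hN : PropN c) (a : ℕ → ℤ)
    (hmono : StrictMono a) (hpos : ∀ k, 0 < a k)
    (hgrow : ∀ k, (Kgrow c : ℤ) * a k < a (k+1)) :
    IsSidonSet c ((fun n : ℤ => (n : ℚ)) '' Set.range a) := by
  constructor
  · exact ⟨(a 0 : ℚ), ⟨a 0, ⟨0, rfl⟩, rfl⟩⟩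
  intro x x' hx hx' heq
  -- extract index functions s, t
  have hxs : ∀ i, ∃ k, ((a k : ℤ) : ℚ) = x i := by
    intro i; obtain ⟨z, ⟨k, hk⟩, hz⟩ := hx i; exact ⟨k, by rw [hk]; exact hz⟩
  have hxt : ∀ i, ∃ k, ((a k : ℤ) : ℚ) = x' i := by
    intro i; obtain ⟨z, ⟨k, hk⟩, hz⟩ := hx' i; exact ⟨k, by rw [hk]; exact hz⟩
  choose s hs using hxs
  choose t ht using hxt
  -- the net coefficient of index n
  set S : ℕ → ℚ := fun n => (∑ i ∈ univ.filter (fun i => s i = n), c i)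
      - ∑ i ∈ univ.filter (fun i => t i = n), c i with hSdef
  set T : Finset ℕ := (univ.image s) ∪ (univ.image t) with hTdef
  have hmemT_s : ∀ i : Fin h, s i ∈ T := fun i =>
    Finset.mem_union_left _ (Finset.mem_image_of_mem s (Finset.mem_univ i))
  have hmemT_t : ∀ i : Fin h, t i ∈ T := fun i =>
    Finset.mem_union_right _ (Finset.mem_image_of_mem t (Finset.mem_univ i))
  have hsum_s : ∑ n ∈ T, (∑ i ∈ univ.filter (fun i => s i = n), c i) * ((a n : ℤ) : ℚ)
      = ∑ i, c i * ((a (s i) : ℤ) : ℚ) := by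
    rw [← Finset.sum_fiberwise_of_maps_to (fun i _ => hmemT_s i)
      (fun i => c i * ((a (s i) : ℤ) : ℚ))]
    refine Finset.sum_congr rfl fun n _ => ?_
    rw [Finset.sum_mul]
    refine Finset.sum_congr rfl fun i hi => ?_
    have : s i = n := (Finset.mem_filter.mp hi).2
    rw [this]
  have hsum_t : ∑ n ∈ T, (∑ i ∈ univ.filter (fun i => t i = n), c i) * ((a n : ℤ) : ℚ)
      = ∑ i, c i * ((a (t i) : ℤ) : ℚ) := by
    rw [← Finset.sum_fiberwise_of_maps_to (fun i _ => hmemT_t i)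
      (fun i => c i * ((a (t i) : ℤ) : ℚ))]
    refine Finset.sum_congr rfl fun n _ => ?_
    rw [Finset.sum_mul]
    refine Finset.sum_congr rfl fun i hi => ?_
    have : t i = n := (Finset.mem_filter.mp hi).2
    rw [this]
  have heq' : ∑ i, c i * ((a (s i) : ℤ) : ℚ) = ∑ i, c i * ((a (t i) : ℤ) : ℚ) := by
    calc ∑ i, c i * ((a (s i) : ℤ) : ℚ) = ∑ i, c i • x i := by
          refine Finset.sum_congr rfl fun i _ => ?_; rw [smul_eq_mul, hs i]
      _ = ∑ i, c i • x' i := heq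
      _ = ∑ i, c i * ((a (t i) : ℤ) : ℚ) := by
          refine Finset.sum_congr rfl fun i _ => ?_; rw [smul_eq_mul, ht i]
  have key : ∑ n ∈ T, S n * ((a n : ℤ) : ℚ) = 0 := by
    simp only [hSdef, sub_mul, Finset.sum_sub_distrib]
    rw [hsum_s, hsum_t, heq', sub_self]
  -- if all net coefficients vanish, done
  by_cases hall : ∀ n, S n = 0
  · have hst : s = t := by
      funext i
      have hfib := fiber_eq hN s t (s i) (sub_eq_zero.mp (hall (s i)))
      have : i ∈ univ.filter (fun j => t j = s i) := by
        rw [← hfib]; exact Finset.mem_filter.mpr ⟨Finset.mem_univ i, rfl⟩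
      exact ((Finset.mem_filter.mp this).2).symm
    funext i
    rw [← hs i, ← ht i, hst]
  -- otherwise derive a contradiction
  exfalso
  push_neg at hall
  obtain ⟨n₀, hn₀⟩ := hall
  have hn₀T : n₀ ∈ T := by
    by_contra hc
    apply hn₀
    have h1 : univ.filter (fun i => s i = n₀) = ∅ := by
      rw [Finset.filter_eq_empty_iff]
      intro i _ hsi; exact hc (hsi ▸ hmemT_s i)
    have h2 : univ.filter (fun i => t i = n₀) = ∅ := by
      rw [Finset.filter_eq_empty_iff]
      intro i _ hti; exact hc (hti ▸ hmemT_t i)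
    rw [hSdef]; simp only [h1, h2, Finset.sum_empty, sub_self]
  set T' : Finset ℕ := T.filter (fun n => S n ≠ 0) with hT'def
  have hT'ne : T'.Nonempty := ⟨n₀, Finset.mem_filter.mpr ⟨hn₀T, hn₀⟩⟩
  set m := T'.max' hT'ne with hmdef
  have hmT' : m ∈ T' := T'.max'_mem hT'ne
  have hSm : S m ≠ 0 := (Finset.mem_filter.mp hmT').2
  have keyT' : ∑ n ∈ T', S n * ((a n : ℤ) : ℚ) = 0 := by
    rw [hT'def, Finset.sum_filter_of_ne, key]
    intro n _ hne hSn
    exact hne (by rw [hSn, zero_mul])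
  have hsplit : S m * ((a m : ℤ) : ℚ) = - ∑ n ∈ T'.erase m, S n * ((a n : ℤ) : ℚ) := by
    have := Finset.add_sum_erase T' (fun n => S n * ((a n : ℤ) : ℚ)) hmT'
    rw [keyT'] at this; linarith
  have hapos : ∀ n, (0:ℚ) < ((a n : ℤ) : ℚ) := fun n => by exact_mod_cast hpos n
  -- m cannot be 0
  rcases Nat.eq_zero_or_pos m with hm0 | hmpos
  · have herase : T'.erase m = ∅ := by
      rw [Finset.eq_empty_iff_forall_notMem]
      intro n hn
      have hne := (Finset.mem_erase.mp hn).1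
      have hle := Finset.le_max' T' n (Finset.mem_erase.mp hn).2
      omega
    rw [herase, Finset.sum_empty, neg_zero] at hsplit
    exact (mul_ne_zero hSm (ne_of_gt (hapos m))) hsplit
  -- m = m' + 1
  obtain ⟨m', hm'⟩ : ∃ m', m = m' + 1 := ⟨m - 1, by omega⟩
  -- bound each term of the erased sum
  have hterm : ∀ n ∈ T'.erase m,
      |S n * ((a n : ℤ) : ℚ)| ≤ 2 * Cbound c * ((a m' : ℤ) : ℚ) := by
    intro n hn
    have hne := (Finset.mem_erase.mp hn).1
    have hle : n ≤ m := Finset.le_max' T' n (Finset.mem_erase.mp hn).2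
    have hnm : n ≤ m' := by omega
    have haa : ((a n : ℤ) : ℚ) ≤ ((a m' : ℤ) : ℚ) := by
      exact_mod_cast hmono.monotone hnm
    have hSb : |S n| ≤ 2 * Cbound c := by
      rw [hSdef]
      calc |(∑ i ∈ univ.filter (fun i => s i = n), c i)
            - ∑ i ∈ univ.filter (fun i => t i = n), c i|
          ≤ |∑ i ∈ univ.filter (fun i => s i = n), c i|
            + |∑ i ∈ univ.filter (fun i => t i = n), c i| := abs_sub _ _
        _ ≤ Cbound c + Cbound c := add_le_add (abs_fiber_sum_le c _) (abs_fiber_sum_le c _)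
        _ = 2 * Cbound c := by ring
    rw [abs_mul, abs_of_pos (hapos n)]
    exact mul_le_mul hSb haa (le_of_lt (hapos n)) (by linarith [Cbound_nonneg c])
  -- cardinality bound
  have hcard : (T'.erase m).card ≤ 2 * h := by
    have h1 : (T'.erase m).card ≤ T.card := by
      apply Finset.card_le_card
      exact (Finset.erase_subset _ _).trans (Finset.filter_subset _ _)
    have h2 : T.card ≤ (univ.image s).card + (univ.image t).card := Finset.card_union_le _ _
    have h3 : (univ.image s).card ≤ h := by
      calc (univ.image s).card ≤ (univ : Finset (Fin h)).card := Finset.card_image_le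
        _ = h := by simp
    have h4 : (univ.image t).card ≤ h := by
      calc (univ.image t).card ≤ (univ : Finset (Fin h)).card := Finset.card_image_le
        _ = h := by simp
    omega
  -- total bound
  have hbound : |S m| * ((a m : ℤ) : ℚ)
      ≤ 4 * h * Cbound c * ((a m' : ℤ) : ℚ) := by
    calc |S m| * ((a m : ℤ) : ℚ)
        = |S m * ((a m : ℤ) : ℚ)| := by
          rw [abs_mul, abs_of_pos (hapos m)]
      _ = |∑ n ∈ T'.erase m, S n * ((a n : ℤ) : ℚ)| := by rw [hsplit, abs_neg]
      _ ≤ ∑ n ∈ T'.erase m, |S n * ((a n : ℤ) : ℚ)| := Finset.abs_sum_le_sum_abs _ _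
      _ ≤ ∑ _n ∈ T'.erase m, 2 * Cbound c * ((a m' : ℤ) : ℚ) :=
          Finset.sum_le_sum hterm
      _ = (T'.erase m).card * (2 * Cbound c * ((a m' : ℤ) : ℚ)) := by
          rw [Finset.sum_const, nsmul_eq_mul]
      _ ≤ (2 * h : ℚ) * (2 * Cbound c * ((a m' : ℤ) : ℚ)) := by
          apply mul_le_mul_of_nonneg_right
          · exact_mod_cast hcard
          · have := Cbound_nonneg c; have := hapos m'; positivity
      _ = 4 * h * Cbound c * ((a m' : ℤ) : ℚ) := by push_cast; ring
  -- growth contradiction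
  have hdel : del c ≤ |S m| := del_le c _ _ hSm
  have hgr : (Kgrow c : ℚ) * ((a m' : ℤ) : ℚ) < ((a m : ℤ) : ℚ) := by
    rw [hm']; exact_mod_cast hgrow m'
  have hKs := Kgrow_spec c (le_of_lt (hapos m')) hgr
  have hfinal : del c * ((a m : ℤ) : ℚ) ≤ |S m| * ((a m : ℤ) : ℚ) :=
    mul_le_mul_of_nonneg_right hdel (le_of_lt (hapos m))
  linarith

end Lemmas

theorem padic_sidon_perturbation {h : ℕ} (c : Fin h → ℚ) (hN : PropN c)
    (ε : ℕ → ℝ) (hε : ∀ k, 0 < ε k) (p : ℕ → ℕ) (hp : ∀ k, (p k).Prime)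
    (b : ℕ → ℤ) :
    ∃ a : ℕ → ℤ, StrictMono a ∧ (∀ k, 0 < a k) ∧
      IsSidonSet c ((fun n : ℤ => (n : ℚ)) '' Set.range a) ∧
      ∀ k : ℕ, ∀ j ≤ k, ((padicNorm (p j) ((a k : ℚ) - (b k : ℚ))) : ℝ) < ε k := by
  classical
  -- choose exponents making (1/2)^(N k) < ε k
  have hN' : ∀ k, ∃ n : ℕ, (1/2 : ℝ) ^ n < ε k := fun k =>
    exists_pow_lt_of_lt_one (hε k) (by norm_num)
  choose N hNspec using hN'
  set Q : ℕ → ℤ := fun k => ((∏ j ∈ Finset.range (k+1), p j : ℕ) : ℤ) ^ (N k) with hQdef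
  have hQ1 : ∀ k, 1 ≤ Q k := by
    intro k
    have h1 : 1 ≤ (∏ j ∈ Finset.range (k+1), p j : ℕ) :=
      Finset.one_le_prod' fun j _ => (hp j).one_lt.le
    have h2 : (1 : ℤ) ≤ ((∏ j ∈ Finset.range (k+1), p j : ℕ) : ℤ) := by exact_mod_cast h1
    exact one_le_pow₀ h2
  have hK1 : 1 ≤ Kgrow c := Kgrow_pos c
  refine ⟨seqA b Q (Kgrow c), seqA_strictMono b Q (Kgrow c) hQ1 hK1,
    seqA_pos b Q (Kgrow c) hQ1 hK1, ?_, ?_⟩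
  · exact sidon_of_growth c hN (seqA b Q (Kgrow c)) (seqA_strictMono b Q (Kgrow c) hQ1 hK1)
      (seqA_pos b Q (Kgrow c) hQ1 hK1) (seqA_succ_gt b Q (Kgrow c) hQ1)
  · intro k j hj
    have hdvd : ((p j : ℤ)) ^ (N k) ∣ seqA b Q (Kgrow c) k - b k := by
      refine dvd_trans ?_ (seqA_sub_dvd b Q (Kgrow c) k)
      have hmem : j ∈ Finset.range (k+1) := Finset.mem_range.mpr (Nat.lt_succ_of_le hj)
      have h1 : (p j : ℤ) ∣ ((∏ i ∈ Finset.range (k+1), p i : ℕ) : ℤ) := by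
        exact_mod_cast Int.natCast_dvd_natCast.mpr (Finset.dvd_prod_of_mem p hmem)
      exact pow_dvd_pow_of_dvd h1 (N k)
    have hcast : ((seqA b Q (Kgrow c) k : ℚ)) - ((b k : ℚ))
        = (((seqA b Q (Kgrow c) k - b k : ℤ)) : ℚ) := by push_cast; ring
    rw [hcast]
    calc ((padicNorm (p j) (((seqA b Q (Kgrow c) k - b k : ℤ)) : ℚ)) : ℝ)
        ≤ (1/2 : ℝ) ^ (N k) := padic_bound (p j) (hp j) (N k) _ hdvd
      _ < ε k := hNspec k
end

section
/- Let F be a field with an absolute value, φ = ∑_{i=1}^h cᵢxᵢ a linear form with coefficients in F, C = ∑_{i=1}^h |cᵢ|, and X a subset of F with φ(X) ⊆ X. If A is a φ-Sidon subset of X, then A(t) ≤ X(Ct)^{1/h} for all t ≥ 0, where A(t) = |{a ∈ A : |a| ≤ t}| and X(t) = |{x ∈ X : |x| ≤ t}|. -/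
/-! Restricting the linear form to `h`-tuples of elements of `A` of absolute value at most `t`
gives a map into the elements of `X` of absolute value at most `C t`, by the triangle
inequality and `φ(X) ⊆ X`; the Sidon property makes it injective, so `A(t) ^ h ≤ X(C t)`. -/

open Finset

variable {F : Type*} [Field F] {V : Type*} [AddCommGroup V] [Module F V]

theorem AbsoluteValue.sum_mul_le_of_le {R ι : Type*} [Semiring R] [Fintype ι]
    (v : AbsoluteValue R ℝ) (c f : ι → R) {t : ℝ} (hf : ∀ i, v (f i) ≤ t) :
    v (∑ i, c i * f i) ≤ (∑ i, v (c i)) * t :=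
  calc v (∑ i, c i * f i) ≤ ∑ i, v (c i) * v (f i) := by
        simpa only [map_mul] using v.sum_le univ fun i => c i * f i
    _ ≤ ∑ i, v (c i) * t :=
        sum_le_sum fun i _ => mul_le_mul_of_nonneg_left (hf i) (v.nonneg _)
    _ = (∑ i, v (c i)) * t := (sum_mul ..).symm

theorem IsSidonSet.injective_sum_smul {h : ℕ} {c : Fin h → F} {A S : Set V}
    (hA : IsSidonSet c A) (hSA : S ⊆ A) :
    Function.Injective fun f : Fin h → S => ∑ i, c i • (f i : V) := by
  intro f f' hff'
  have hval := hA.2 _ _ (fun i => hSA (f i).2) (fun i => hSA (f' i).2) hff'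
  exact funext fun i => Subtype.ext (congrFun hval i)

theorem Set.ncard_pow_le_ncard_of_injective {ι α β : Type*} [Finite ι] {S : Set α} {T : Set β}
    (hT : T.Finite) (g : (ι → S) → T) (hg : Function.Injective g) :
    S.ncard ^ Nat.card ι ≤ T.ncard := by
  have : Finite T := hT
  simpa only [Nat.card_fun, Nat.card_coe_set_eq] using Nat.card_le_card_of_injective g hg

theorem Real.natCast_le_rpow_one_div_of_pow_le {m n h : ℕ} (hh : 0 < h) (hmn : m ^ h ≤ n) :
    (m : ℝ) ≤ (n : ℝ) ^ ((1 : ℝ) / h) := by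
  rw [one_div, Real.le_rpow_inv_iff_of_pos (by positivity) (by positivity) (by positivity),
    Real.rpow_natCast]
  exact_mod_cast hmn

theorem sidon_counting_bound_general {F : Type*} [Field F] (v : AbsoluteValue F ℝ)
    {h : ℕ} (hh : 0 < h) (c : Fin h → F)
    (X : Set F) (hXfin : ∀ s : ℝ, {x ∈ X | v x ≤ s}.Finite)
    (hXcl : ∀ f : Fin h → F, (∀ i, f i ∈ X) → (∑ i, c i * f i) ∈ X)
    (A : Set F) (hAX : A ⊆ X) (hA : IsSidonSet c A)
    (t : ℝ) :
    (({a ∈ A | v a ≤ t}.ncard : ℝ)) ≤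
      (({x ∈ X | v x ≤ (∑ i, v (c i)) * t}.ncard : ℝ)) ^ ((1 : ℝ) / h) := by
  set S : Set F := {a ∈ A | v a ≤ t}
  set T : Set F := {x ∈ X | v x ≤ (∑ i, v (c i)) * t}
  have hmaps (f : Fin h → S) : ∑ i, c i * (f i : F) ∈ T :=
    ⟨hXcl _ fun i => hAX (f i).2.1, v.sum_mul_le_of_le c _ fun i => (f i).2.2⟩
  have hinj : Function.Injective fun f : Fin h → S => (⟨_, hmaps f⟩ : T) := fun f f' hff' =>
    hA.injective_sum_smul (fun _ ha => ha.1) (congrArg Subtype.val hff')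
  have hcard := Set.ncard_pow_le_ncard_of_injective (hXfin _) _ hinj
  rw [Nat.card_fin] at hcard
  exact Real.natCast_le_rpow_one_div_of_pow_le hh hcard

theorem sidon_counting_bound {F : Type*} [Field F] (v : AbsoluteValue F ℝ)
    {h : ℕ} (hh : 0 < h) (c : Fin h → F)
    (X : Set F) (hXfin : ∀ s : ℝ, {x ∈ X | v x ≤ s}.Finite)
    (hXcl : ∀ f : Fin h → F, (∀ i, f i ∈ X) → (∑ i, c i * f i) ∈ X)
    (A : Set F) (hAX : A ⊆ X) (hA : IsSidonSet c A)
    (t : ℝ) (ht : 0 ≤ t) :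
    (({a ∈ A | v a ≤ t}.ncard : ℝ)) ≤
      (({x ∈ X | v x ≤ (∑ i, v (c i)) * t}.ncard : ℝ)) ^ ((1 : ℝ) / h) :=
  sidon_counting_bound_general v hh c X hXfin hXcl A hAX hA t
end

section
/- If φ = ∑_{i=1}^h cᵢxᵢ is a linear form with integer coefficients and A is a φ-Sidon set of integers, then A(t) = |{a ∈ A : |a| ≤ t}| satisfies A(t)^h ≤ 2Ct + 1 for all t ≥ 0, where C = ∑_{i=1}^h |cᵢ|; in particular A(t) ≪ t^{1/h}. -/
/-!
Pigeonhole: the `A(t)^h` tuples of elements of `A ∩ [-t, t]` are mapped injectively by `φ`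
(this is the Sidon property) into the integers of `[-Ct, Ct]`, of which there are at most
`2Ct + 1`. Taking `h`-th roots gives `A(t) ≪ t^{1/h}`.
-/

open Finset

/-- `A` is a Sidon set of integers for the linear form `φ = ∑ cᵢ xᵢ` with integer
coefficients. -/
def IsSidonSetZ {h : ℕ} (c : Fin h → ℤ) (A : Set ℤ) : Prop :=
  A.Nonempty ∧ ∀ a a' : Fin h → ℤ, (∀ i, a i ∈ A) → (∀ i, a' i ∈ A) →
    ∑ i, c i * a i = ∑ i, c i * a' i → a = a'

lemma abs_sum_mul_le_of_abs_le {R ι : Type*} [Ring R] [LinearOrder R] [IsOrderedRing R]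
    (s : Finset ι) (c a : ι → R) {n : R} (ha : ∀ i ∈ s, |a i| ≤ n) :
    |∑ i ∈ s, c i * a i| ≤ (∑ i ∈ s, |c i|) * n :=
  calc |∑ i ∈ s, c i * a i| ≤ ∑ i ∈ s, |c i| * |a i| := by
        simpa only [abs_mul] using abs_sum_le_sum_abs (fun i => c i * a i) s
    _ ≤ ∑ i ∈ s, |c i| * n :=
        sum_le_sum fun i hi => mul_le_mul_of_nonneg_left (ha i hi) (abs_nonneg _)
    _ = (∑ i ∈ s, |c i|) * n := (sum_mul ..).symm

lemma card_pow_le_of_injOn_sum_mul {ι : Type*} [Fintype ι] [DecidableEq ι] (c : ι → ℤ)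
    {F : Finset ℤ} {n : ℤ} (hn : 0 ≤ n) (hF : ∀ a ∈ F, |a| ≤ n)
    (hinj : Set.InjOn (fun a : ι → ℤ => ∑ i, c i * a i) ↑(Fintype.piFinset fun _ : ι => F)) :
    (#F : ℤ) ^ Fintype.card ι ≤ 2 * (∑ i, |c i|) * n + 1 := by
  set C := ∑ i, |c i|
  have hC : 0 ≤ C := sum_nonneg fun i _ => abs_nonneg _
  have hmaps : ∀ a ∈ Fintype.piFinset fun _ => F, ∑ i, c i * a i ∈ Icc (-(C * n)) (C * n) :=
    fun a ha => mem_Icc.2 <| abs_le.1 <|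
      abs_sum_mul_le_of_abs_le _ _ _ fun i _ => hF _ (Fintype.mem_piFinset.1 ha i)
  have hcard := card_le_card_of_injOn _ hmaps hinj
  rw [Fintype.card_piFinset, prod_const, card_univ, Int.card_Icc] at hcard
  have hCn : 0 ≤ C * n := mul_nonneg hC hn
  zify at hcard
  rw [Int.toNat_of_nonneg (by linarith)] at hcard
  linarith

lemma ncard_abs_le_eq_card_filter_Icc (A : Set ℤ) [DecidablePred (· ∈ A)] (t : ℝ) :
    {a ∈ A | |(a : ℝ)| ≤ t}.ncard = #{a ∈ Icc (-⌊t⌋) ⌊t⌋ | a ∈ A} := by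
  rw [← Set.ncard_coe_finset]
  congr 1
  ext a
  rw [coe_filter, Set.mem_ofPred_eq, Set.mem_ofPred_eq, mem_Icc, ← abs_le, Int.le_floor,
    Int.cast_abs, and_comm]

lemma IsSidonSetZ.ncard_pow_le {h : ℕ} {c : Fin h → ℤ} {A : Set ℤ} (hA : IsSidonSetZ c A)
    {t : ℝ} (ht : 0 ≤ t) :
    ({a ∈ A | |(a : ℝ)| ≤ t}.ncard : ℝ) ^ h ≤ 2 * (∑ i, |(c i : ℝ)|) * t + 1 := by
  classical
  set F : Finset ℤ := {a ∈ Icc (-⌊t⌋) ⌊t⌋ | a ∈ A}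
  have hF : ∀ a ∈ F, |a| ≤ ⌊t⌋ := fun a ha => abs_le.2 (mem_Icc.1 (mem_filter.1 ha).1)
  have hcount := card_pow_le_of_injOn_sum_mul c (Int.floor_nonneg.2 ht) hF
    fun a ha a' ha' => hA.2 a a' (fun i => (mem_filter.1 (Fintype.mem_piFinset.1 ha i)).2)
      (fun i => (mem_filter.1 (Fintype.mem_piFinset.1 ha' i)).2)
  rw [Fintype.card_fin] at hcount
  rw [ncard_abs_le_eq_card_filter_Icc]
  calc (#F : ℝ) ^ h ≤ 2 * (∑ i, |(c i : ℝ)|) * ⌊t⌋ + 1 := by exact_mod_cast hcount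
    _ ≤ 2 * (∑ i, |(c i : ℝ)|) * t + 1 := by gcongr; exact Int.floor_le t

lemma le_mul_rpow_one_div_of_pow_le_mul {x B t : ℝ} {h : ℕ} (hh : h ≠ 0) (hx : 0 ≤ x)
    (hB : 1 ≤ B) (ht : 0 ≤ t) (hxh : x ^ h ≤ B * t) : x ≤ B * t ^ ((1 : ℝ) / h) := by
  rw [← pow_le_pow_iff_left₀ hx (by positivity) hh, mul_pow, one_div,
    Real.rpow_inv_natCast_pow ht hh]
  calc x ^ h ≤ B * t := hxh
    _ ≤ B ^ h * t := mul_le_mul_of_nonneg_right (le_self_pow₀ hB hh) ht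

theorem sidon_counting_bound_int {h : ℕ} (hh : 0 < h) (c : Fin h → ℤ)
    (A : Set ℤ) (hA : IsSidonSetZ c A) :
    (∀ t : ℝ, 0 ≤ t →
      (({a ∈ A | |(a : ℝ)| ≤ t}.ncard : ℝ)) ^ h ≤
        2 * (∑ i, |(c i : ℝ)|) * t + 1) ∧
    ∃ K : ℝ, 0 < K ∧ ∀ t : ℝ, 1 ≤ t →
      (({a ∈ A | |(a : ℝ)| ≤ t}.ncard : ℝ)) ≤ K * t ^ ((1 : ℝ) / h) := by
  refine ⟨fun t ht => hA.ncard_pow_le ht, ?_⟩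
  set C := ∑ i, |(c i : ℝ)|
  have hC : 0 ≤ C := sum_nonneg fun i _ => abs_nonneg _
  refine ⟨2 * C + 1, by positivity, fun t ht => ?_⟩
  refine le_mul_rpow_one_div_of_pow_le_mul hh.ne' (Nat.cast_nonneg _) (by linarith)
    (by linarith) ?_
  calc _ ≤ 2 * C * t + 1 := hA.ncard_pow_le (by linarith)
    _ ≤ (2 * C + 1) * t := by linarith
end

section
/- Let φ = ∑_{i=1}^h cᵢxᵢ be a linear form with integer coefficients satisfying property N. There exists an infinite φ-Sidon set A = {a_k : k ∈ ℕ} of distinct positive integers such that a_{k+1} ≤ 4^h·k^{2h−1} + k for all k ≥ 1; consequently there is an infinite φ-Sidon set of positive integers with counting function A(t) ≫ t^{1/(2h−1)}. -/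
open Finset

/-- Property N for a linear form with integer coefficients. -/
def PropNZ {h : ℕ} (c : Fin h → ℤ) : Prop :=
  ¬ ∃ I₁ I₂ : Finset (Fin h), Disjoint I₁ I₂ ∧ ¬(I₁ = ∅ ∧ I₂ = ∅) ∧
      ∑ i ∈ I₁, c i = ∑ i ∈ I₂, c i

namespace SidonAux

variable {h : ℕ}

/-- `A` is one-to-one for tuples from `A`. -/
def SidonF (c : Fin h → ℤ) (A : Set ℤ) : Prop :=
  ∀ u v : Fin h → ℤ, (∀ i, u i ∈ A) → (∀ i, v i ∈ A) →
    ∑ i, c i * u i = ∑ i, c i * v i → u = v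

/-- `x` destroys the Sidon property when added to `A`. -/
def Bad (c : Fin h → ℤ) (A : Finset ℤ) (x : ℤ) : Prop :=
  ∃ u v : Fin h → ℤ, (∀ i, u i ∈ insert x A) ∧ (∀ i, v i ∈ insert x A) ∧
    (∑ i, c i * u i = ∑ i, c i * v i) ∧ u ≠ v

/-- `n` is a valid choice of next element. -/
def GoodN (c : Fin h → ℤ) (A : Finset ℤ) (n : ℕ) : Prop :=
  n ≠ 0 ∧ (n : ℤ) ∉ A ∧ ¬ Bad c A (n : ℤ)

variable {c : Fin h → ℤ}

lemma sum_ne (hN : PropNZ c) {S S' : Finset (Fin h)} (hss : S ≠ S') :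
    ∑ i ∈ S, c i ≠ ∑ i ∈ S', c i := by
  intro heq
  have h1 : ∑ i ∈ S \ (S ∩ S'), c i + ∑ i ∈ S ∩ S', c i = ∑ i ∈ S, c i :=
    Finset.sum_sdiff inter_subset_left
  have h2 : ∑ i ∈ S' \ (S' ∩ S), c i + ∑ i ∈ S' ∩ S, c i = ∑ i ∈ S', c i :=
    Finset.sum_sdiff inter_subset_left
  rw [sdiff_inter_self_left] at h1 h2
  rw [inter_comm] at h2
  have hsum : ∑ i ∈ S \ S', c i = ∑ i ∈ S' \ S, c i := by omega
  apply hN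
  refine ⟨S \ S', S' \ S, disjoint_sdiff_sdiff, ?_, hsum⟩
  rintro ⟨e1, e2⟩
  exact hss (le_antisymm (sdiff_eq_empty_iff_subset.mp e1) (sdiff_eq_empty_iff_subset.mp e2))

lemma sidonF_empty : SidonF c (↑(∅ : Finset ℤ)) := by
  intro u v hu _ _
  funext i
  exact absurd (hu i) (by simp)

lemma bad_mono {A A' : Finset ℤ} (hAA : A ⊆ A') {x : ℤ} (hb : Bad c A x) : Bad c A' x := by
  obtain ⟨u, v, hu, hv, hs, hne⟩ := hb
  exact ⟨u, v, fun i => insert_subset_insert x hAA (hu i),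
    fun i => insert_subset_insert x hAA (hv i), hs, hne⟩

lemma sidonF_insert {A : Finset ℤ} {x : ℤ} (hx : ¬ Bad c A x) :
    SidonF c ↑(insert x A) := by
  intro u v hu hv hs
  by_contra hne
  exact hx ⟨u, v, fun i => by simpa using hu i, fun i => by simpa using hv i, hs, hne⟩

lemma not_bad_empty {x : ℤ} : ¬ Bad c (∅ : Finset ℤ) x := by
  rintro ⟨u, v, hu, hv, _, hne⟩
  apply hne
  funext i
  have h1 := hu i; have h2 := hv i
  simp only [LawfulSingleton.insert_empty_eq, mem_singleton] at h1 h2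
  rw [h1, h2]

/-- A finite set covering all "bad" values for `A`. -/
def covB (c : Fin h → ℤ) (A : Finset ℤ) : Finset ℤ :=
  ((Finset.univ : Finset (Finset (Fin h) × Finset (Fin h))).filter (fun p => p.1 ≠ p.2)).biUnion
    (fun p =>
      ((Fintype.piFinset (fun i => if i ∈ p.1 then ({0} : Finset ℤ) else A)) ×ˢ
       (Fintype.piFinset (fun i => if i ∈ p.2 then ({0} : Finset ℤ) else A))).image
        (fun uv => ((∑ i ∈ p.2ᶜ, c i * uv.2 i) - (∑ i ∈ p.1ᶜ, c i * uv.1 i)) /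
          (∑ i ∈ p.1, c i - ∑ i ∈ p.2, c i)))

lemma covB_card {A : Finset ℤ} (hk : 1 ≤ A.card) :
    (covB c A).card ≤ (4 ^ h - 1) * A.card ^ (2 * h - 1) := by
  classical
  set k := A.card
  refine le_trans Finset.card_biUnion_le ?_
  have hbound : ∀ p ∈ ((Finset.univ : Finset (Finset (Fin h) × Finset (Fin h))).filter
      (fun p => p.1 ≠ p.2)),
      (((Fintype.piFinset (fun i => if i ∈ p.1 then ({0} : Finset ℤ) else A)) ×ˢ
       (Fintype.piFinset (fun i => if i ∈ p.2 then ({0} : Finset ℤ) else A))).image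
        (fun uv => ((∑ i ∈ p.2ᶜ, c i * uv.2 i) - (∑ i ∈ p.1ᶜ, c i * uv.1 i)) /
          (∑ i ∈ p.1, c i - ∑ i ∈ p.2, c i))).card ≤ k ^ (2 * h - 1) := by
    intro p hp
    rw [mem_filter] at hp
    refine le_trans Finset.card_image_le ?_
    rw [Finset.card_product, Fintype.card_piFinset, Fintype.card_piFinset]
    have hcard : ∀ (S : Finset (Fin h)),
        (∏ i, (if i ∈ S then ({0} : Finset ℤ) else A).card) = k ^ (h - S.card) := by
      intro S
      rw [← Finset.prod_mul_prod_compl S]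
      have h1 : (∏ i ∈ S, (if i ∈ S then ({0} : Finset ℤ) else A).card) = 1 := by
        apply Finset.prod_eq_one; intro i hi; rw [if_pos hi]; simp
      have h2 : (∏ i ∈ Sᶜ, (if i ∈ S then ({0} : Finset ℤ) else A).card) = k ^ (h - S.card) := by
        rw [Finset.prod_congr rfl (fun i hi => by rw [if_neg (Finset.mem_compl.mp hi)]),
          Finset.prod_const, Finset.card_compl, Fintype.card_fin]
      rw [h1, h2, one_mul]
    rw [hcard, hcard, ← pow_add]
    apply Nat.pow_le_pow_right hk
    have hS : p.1.card ≤ h := le_trans (Finset.card_le_card (Finset.subset_univ _))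
      (le_of_eq (by simp))
    have hS' : p.2.card ≤ h := le_trans (Finset.card_le_card (Finset.subset_univ _))
      (le_of_eq (by simp))
    have hpos : 1 ≤ p.1.card + p.2.card := by
      by_contra hc
      push_neg at hc
      interval_cases hc1 : p.1.card + p.2.card
      have e1 : p.1 = ∅ := Finset.card_eq_zero.mp (by omega)
      have e2 : p.2 = ∅ := Finset.card_eq_zero.mp (by omega)
      exact hp.2 (e1.trans e2.symm)
    omega
  refine le_trans (Finset.sum_le_sum hbound) ?_
  rw [Finset.sum_const, smul_eq_mul]
  apply Nat.mul_le_mul_right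
  have hsub : ((Finset.univ : Finset (Finset (Fin h) × Finset (Fin h))).filter
      (fun p => p.1 ≠ p.2)) ⊆ Finset.univ.erase ((∅ : Finset (Fin h)), (∅ : Finset (Fin h))) := by
    intro p hp
    rw [mem_filter] at hp
    rw [Finset.mem_erase]
    refine ⟨?_, mem_univ _⟩
    rintro rfl
    exact hp.2 rfl
  refine le_trans (Finset.card_le_card hsub) ?_
  rw [Finset.card_erase_of_mem (mem_univ _), Finset.card_univ]
  have : Fintype.card (Finset (Fin h) × Finset (Fin h)) = 4 ^ h := by
    simp [Fintype.card_prod, ← mul_pow]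
  omega

lemma mem_covB (hN : PropNZ c) {A : Finset ℤ} (hA : SidonF c ↑A) (hAne : A.Nonempty)
    {x : ℤ} (hb : Bad c A x) : x ∈ covB c A := by
  classical
  obtain ⟨u, v, hu, hv, hs, hne⟩ := hb
  set S : Finset (Fin h) := Finset.univ.filter (fun i => u i = x) with hS
  set S' : Finset (Fin h) := Finset.univ.filter (fun i => v i = x) with hS'
  have hmemS : ∀ i, i ∈ S ↔ u i = x := fun i => by simp [hS]
  have hmemS' : ∀ i, i ∈ S' ↔ v i = x := fun i => by simp [hS']
  have huA : ∀ i, i ∉ S → u i ∈ A := by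
    intro i hi
    rcases Finset.mem_insert.mp (hu i) with h1 | h1
    · exact absurd ((hmemS i).mpr h1) hi
    · exact h1
  have hvA : ∀ i, i ∉ S' → v i ∈ A := by
    intro i hi
    rcases Finset.mem_insert.mp (hv i) with h1 | h1
    · exact absurd ((hmemS' i).mpr h1) hi
    · exact h1
  -- S ≠ S'
  have hSS : S ≠ S' := by
    intro heq
    obtain ⟨a₀, ha₀⟩ := hAne
    set u' : Fin h → ℤ := fun i => if i ∈ S then a₀ else u i with hu'
    set v' : Fin h → ℤ := fun i => if i ∈ S' then a₀ else v i with hv'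
    have hu'A : ∀ i, u' i ∈ (↑A : Set ℤ) := by
      intro i; rw [hu']; dsimp only
      split
      · exact ha₀
      · exact huA i (by assumption)
    have hv'A : ∀ i, v' i ∈ (↑A : Set ℤ) := by
      intro i; rw [hv']; dsimp only
      split
      · exact ha₀
      · exact hvA i (by assumption)
    have hsum' : ∑ i, c i * u' i = ∑ i, c i * v' i := by
      have e1 : ∑ i, c i * u' i = ∑ i ∈ S, c i * a₀ + ∑ i ∈ Sᶜ, c i * u i := by
        rw [← Finset.sum_add_sum_compl S]
        congr 1
        · exact Finset.sum_congr rfl (fun i hi => by rw [hu']; dsimp only; rw [if_pos hi])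
        · exact Finset.sum_congr rfl (fun i hi => by
            rw [hu']; dsimp only; rw [if_neg (Finset.mem_compl.mp hi)])
      have e2 : ∑ i, c i * v' i = ∑ i ∈ S', c i * a₀ + ∑ i ∈ S'ᶜ, c i * v i := by
        rw [← Finset.sum_add_sum_compl S']
        congr 1
        · exact Finset.sum_congr rfl (fun i hi => by rw [hv']; dsimp only; rw [if_pos hi])
        · exact Finset.sum_congr rfl (fun i hi => by
            rw [hv']; dsimp only; rw [if_neg (Finset.mem_compl.mp hi)])
      have e3 : ∑ i, c i * u i = ∑ i ∈ S, c i * x + ∑ i ∈ Sᶜ, c i * u i := by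
        rw [← Finset.sum_add_sum_compl S]
        congr 1
        exact Finset.sum_congr rfl (fun i hi => by rw [(hmemS i).mp hi])
      have e4 : ∑ i, c i * v i = ∑ i ∈ S', c i * x + ∑ i ∈ S'ᶜ, c i * v i := by
        rw [← Finset.sum_add_sum_compl S']
        congr 1
        exact Finset.sum_congr rfl (fun i hi => by rw [(hmemS' i).mp hi])
      rw [e1, e2, ← heq]
      rw [e3, e4, ← heq] at hs
      omega
    have := hA u' v' hu'A hv'A hsum'
    apply hne
    funext i
    by_cases hi : i ∈ S
    · rw [(hmemS i).mp hi, (hmemS' i).mp (heq ▸ hi)]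
    · have h1 : u' i = u i := by rw [hu']; dsimp only; rw [if_neg hi]
      have h2 : v' i = v i := by rw [hv']; dsimp only; rw [if_neg (heq ▸ hi)]
      rw [← h1, ← h2, this]
  -- nonzero denominator
  have hd : (∑ i ∈ S, c i) - (∑ i ∈ S', c i) ≠ 0 := sub_ne_zero.mpr (sum_ne hN hSS)
  -- restricted tuples
  set u₀ : Fin h → ℤ := fun i => if i ∈ S then 0 else u i with hu₀
  set v₀ : Fin h → ℤ := fun i => if i ∈ S' then 0 else v i with hv₀
  have hu₀mem : u₀ ∈ Fintype.piFinset (fun i => if i ∈ S then ({0} : Finset ℤ) else A) := by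
    rw [Fintype.mem_piFinset]
    intro i
    rw [hu₀]; dsimp only
    by_cases hi : i ∈ S
    · rw [if_pos hi, if_pos hi]; simp
    · rw [if_neg hi, if_neg hi]; exact huA i hi
  have hv₀mem : v₀ ∈ Fintype.piFinset (fun i => if i ∈ S' then ({0} : Finset ℤ) else A) := by
    rw [Fintype.mem_piFinset]
    intro i
    rw [hv₀]; dsimp only
    by_cases hi : i ∈ S'
    · rw [if_pos hi, if_pos hi]; simp
    · rw [if_neg hi, if_neg hi]; exact hvA i hi
  -- the key equation
  have hkey : ((∑ i ∈ S'ᶜ, c i * v₀ i) - (∑ i ∈ Sᶜ, c i * u₀ i)) =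
      x * ((∑ i ∈ S, c i) - (∑ i ∈ S', c i)) := by
    have e3 : ∑ i, c i * u i = (∑ i ∈ S, c i) * x + ∑ i ∈ Sᶜ, c i * u₀ i := by
      rw [← Finset.sum_add_sum_compl S, Finset.sum_mul]
      congr 1
      · exact Finset.sum_congr rfl (fun i hi => by rw [(hmemS i).mp hi])
      · exact Finset.sum_congr rfl (fun i hi => by
          rw [hu₀]; dsimp only; rw [if_neg (Finset.mem_compl.mp hi)])
    have e4 : ∑ i, c i * v i = (∑ i ∈ S', c i) * x + ∑ i ∈ S'ᶜ, c i * v₀ i := by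
      rw [← Finset.sum_add_sum_compl S', Finset.sum_mul]
      congr 1
      · exact Finset.sum_congr rfl (fun i hi => by rw [(hmemS' i).mp hi])
      · exact Finset.sum_congr rfl (fun i hi => by
          rw [hv₀]; dsimp only; rw [if_neg (Finset.mem_compl.mp hi)])
    rw [e3, e4] at hs
    linear_combination -hs
  rw [covB, Finset.mem_biUnion]
  refine ⟨(S, S'), Finset.mem_filter.mpr ⟨mem_univ _, hSS⟩, ?_⟩
  rw [Finset.mem_image]
  refine ⟨(u₀, v₀), Finset.mem_product.mpr ⟨hu₀mem, hv₀mem⟩, ?_⟩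
  exact Int.ediv_eq_of_eq_mul_left hd hkey

lemma exists_goodN (hN : PropNZ c) {A : Finset ℤ} (hA : SidonF c ↑A) :
    ∃ n : ℕ, GoodN c A n ∧ (1 ≤ A.card →
      (n : ℤ) ≤ 4 ^ h * (A.card : ℤ) ^ (2 * h - 1) + A.card) := by
  rcases A.eq_empty_or_nonempty with rfl | hAne
  · exact ⟨1, ⟨one_ne_zero, by simp, not_bad_empty⟩, by simp⟩
  · set N : ℤ := (((covB c A).card + A.card + 1 : ℕ) : ℤ) with hNdef
    have hcard : ((Finset.Icc (1 : ℤ) N)).card = (covB c A).card + A.card + 1 := by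
      rw [Int.card_Icc, hNdef]
      omega
    have hex : ∃ x ∈ Finset.Icc (1 : ℤ) N, x ∉ covB c A ∪ A := by
      by_contra hcon
      push_neg at hcon
      have hsub : Finset.Icc (1 : ℤ) N ⊆ covB c A ∪ A := hcon
      have := Finset.card_le_card hsub
      have hBle : (covB c A ∪ A).card ≤ (covB c A).card + A.card := Finset.card_union_le _ _
      omega
    obtain ⟨x, hxI, hxB⟩ := hex
    rw [Finset.mem_Icc] at hxI
    have hx1 : 1 ≤ x := hxI.1
    refine ⟨x.toNat, ⟨?_, ?_, ?_⟩, ?_⟩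
    · omega
    · rw [Int.toNat_of_nonneg (by omega)]
      intro hmem
      exact hxB (Finset.mem_union_right _ hmem)
    · rw [Int.toNat_of_nonneg (by omega)]
      intro hbad
      exact hxB (Finset.mem_union_left _ (mem_covB hN hA hAne hbad))
    · intro hk
      rw [Int.toNat_of_nonneg (by omega)]
      have hcov := covB_card (c := c) (A := A) hk
      have hNle : N ≤ 4 ^ h * (A.card : ℤ) ^ (2 * h - 1) + A.card := by
        rw [hNdef]
        push_cast
        have h1 : ((covB c A).card : ℤ) ≤ ((4 ^ h - 1) * A.card ^ (2 * h - 1) : ℕ) := by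
          exact_mod_cast hcov
        have h2 : (1 : ℤ) ≤ (A.card : ℤ) ^ (2 * h - 1) :=
          one_le_pow₀ (by exact_mod_cast hk)
        have h4 : (1 : ℕ) ≤ 4 ^ h := Nat.one_le_pow _ _ (by norm_num)
        have h3 : (((4 ^ h - 1) * A.card ^ (2 * h - 1) : ℕ) : ℤ) =
            ((4 : ℤ) ^ h - 1) * (A.card : ℤ) ^ (2 * h - 1) := by
          rw [Nat.cast_mul, Nat.cast_sub h4, Nat.cast_pow, Nat.cast_pow]
          norm_num
        rw [h3] at h1
        nlinarith [pow_pos (show (0:ℤ) < 4 by norm_num) h]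
      omega

open scoped Classical in
/-- The next element of the greedy sequence. -/
noncomputable def nextN (hN : PropNZ c) (A : Finset ℤ) (hA : SidonF c ↑A) : ℕ :=
  Nat.find ((exists_goodN hN hA).imp (fun _ hn => hn.1))

lemma nextN_good (hN : PropNZ c) {A : Finset ℤ} (hA : SidonF c ↑A) :
    GoodN c A (nextN hN A hA) := by
  classical
  exact Nat.find_spec ((exists_goodN hN hA).imp (fun _ hn => hn.1))

lemma nextN_min (hN : PropNZ c) {A : Finset ℤ} (hA : SidonF c ↑A) {n : ℕ} (hn : GoodN c A n) :
    nextN hN A hA ≤ n := by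
  classical
  exact Nat.find_min' _ hn

lemma nextN_le (hN : PropNZ c) {A : Finset ℤ} (hA : SidonF c ↑A) (hk : 1 ≤ A.card) :
    ((nextN hN A hA : ℕ) : ℤ) ≤ 4 ^ h * (A.card : ℤ) ^ (2 * h - 1) + A.card := by
  obtain ⟨n, hn, hb⟩ := exists_goodN hN hA
  exact le_trans (by exact_mod_cast nextN_min hN hA hn) (hb hk)

/-- The greedy chain of finite Sidon sets. -/
noncomputable def chain (hN : PropNZ c) : ℕ → {A : Finset ℤ // SidonF c ↑A}
  | 0 => ⟨∅, sidonF_empty⟩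
  | k + 1 =>
    ⟨insert ((nextN hN (chain hN k).1 (chain hN k).2 : ℕ) : ℤ) (chain hN k).1,
      sidonF_insert (nextN_good hN (chain hN k).2).2.2⟩

/-- The greedy sequence. -/
noncomputable def aseq (hN : PropNZ c) (k : ℕ) : ℤ :=
  ((nextN hN (chain hN k).1 (chain hN k).2 : ℕ) : ℤ)

lemma chain_succ (hN : PropNZ c) (k : ℕ) :
    (chain hN (k + 1)).1 = insert (aseq hN k) (chain hN k).1 := rfl

lemma chain_zero (hN : PropNZ c) : (chain hN 0).1 = ∅ := rfl

lemma aseq_pos (hN : PropNZ c) (k : ℕ) : 0 < aseq hN k := by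
  have := (nextN_good hN (chain hN k).2).1
  unfold aseq
  omega

lemma aseq_not_mem (hN : PropNZ c) (k : ℕ) : aseq hN k ∉ (chain hN k).1 :=
  (nextN_good hN (chain hN k).2).2.1

lemma chain_card (hN : PropNZ c) (k : ℕ) : (chain hN k).1.card = k := by
  induction k with
  | zero => rfl
  | succ k ih => rw [chain_succ, Finset.card_insert_of_notMem (aseq_not_mem hN k), ih]

lemma chain_mono (hN : PropNZ c) {j k : ℕ} (hjk : j ≤ k) : (chain hN j).1 ⊆ (chain hN k).1 := by
  induction k with
  | zero => simp [Nat.le_zero.mp hjk]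
  | succ k ih =>
    rcases Nat.lt_or_ge j (k+1) with hl | hg
    · exact (ih (by omega)).trans (by rw [chain_succ]; exact Finset.subset_insert _ _)
    · have : j = k + 1 := by omega
      subst this; exact Finset.Subset.refl _

lemma aseq_mem (hN : PropNZ c) {j k : ℕ} (hjk : j < k) : aseq hN j ∈ (chain hN k).1 := by
  apply chain_mono hN (show j + 1 ≤ k by omega)
  rw [chain_succ]
  exact Finset.mem_insert_self _ _

lemma aseq_strictMono (hN : PropNZ c) : StrictMono (aseq hN) := by
  apply strictMono_nat_of_lt_succ
  intro k
  have hgood := nextN_good hN (chain hN (k+1)).2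
  have hle : nextN hN (chain hN k).1 (chain hN k).2 ≤
      nextN hN (chain hN (k+1)).1 (chain hN (k+1)).2 := by
    apply nextN_min
    refine ⟨hgood.1, ?_, ?_⟩
    · intro hmem
      exact hgood.2.1 (chain_mono hN (Nat.le_succ k) hmem)
    · intro hbad
      exact hgood.2.2 (bad_mono (chain_mono hN (Nat.le_succ k)) hbad)
  have hne : nextN hN (chain hN k).1 (chain hN k).2 ≠
      nextN hN (chain hN (k+1)).1 (chain hN (k+1)).2 := by
    intro heq
    apply hgood.2.1
    show ((nextN hN (chain hN (k+1)).1 (chain hN (k+1)).2 : ℕ) : ℤ) ∈ _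
    rw [← heq]
    exact aseq_mem hN (Nat.lt_succ_self k)
  unfold aseq
  exact_mod_cast lt_of_le_of_ne hle hne

lemma aseq_bound (hN : PropNZ c) (k : ℕ) (hk : 1 ≤ k) :
    aseq hN k ≤ 4 ^ h * (k : ℤ) ^ (2 * h - 1) + k := by
  have := nextN_le hN (chain hN k).2 (by rw [chain_card]; exact hk)
  rw [chain_card] at this
  exact this

lemma aseq_zero (hN : PropNZ c) : aseq hN 0 = 1 := by
  have h1 : GoodN c (chain hN 0).1 1 := by
    refine ⟨one_ne_zero, ?_, ?_⟩
    · rw [chain_zero]; simp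
    · rw [chain_zero]; exact not_bad_empty
  have hle := nextN_min hN (chain hN 0).2 h1
  have := (nextN_good hN (chain hN 0).2).1
  unfold aseq
  omega

lemma aseq_sidon (hN : PropNZ c) : SidonF c (Set.range (aseq hN)) := by
  intro u v hu hv hs
  choose g hg using hu
  choose g' hg' using hv
  set K : ℕ := (Finset.univ.sup g) + (Finset.univ.sup g') + 1 with hK
  apply (chain hN K).2 u v ?_ ?_ hs
  · intro i
    rw [← hg i]
    exact aseq_mem hN (by
      have := Finset.le_sup (f := g) (Finset.mem_univ i); omega)
  · intro i
    rw [← hg' i]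
    exact aseq_mem hN (by
      have := Finset.le_sup (f := g') (Finset.mem_univ i); omega)

end SidonAux

/-- The sequence `a : ℕ → ℤ` is indexed so that `a k` is the `(k+1)`-st element
`a_{k+1}` of the Sidon set. -/
theorem sidon_growth {h : ℕ} (hh : 0 < h) (c : Fin h → ℤ) (hN : PropNZ c) :
    ∃ a : ℕ → ℤ, StrictMono a ∧ (∀ k, 0 < a k) ∧ IsSidonSetZ c (Set.range a) ∧
      (∀ k : ℕ, 1 ≤ k → a k ≤ 4 ^ h * (k : ℤ) ^ (2 * h - 1) + k) ∧
      ∃ K : ℝ, 0 < K ∧ ∀ t : ℝ, 1 ≤ t →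
        K * t ^ ((1 : ℝ) / (2 * h - 1)) ≤
          (({x ∈ Set.range a | (x : ℝ) ≤ t}.ncard : ℝ)) := by
  classical
  set a : ℕ → ℤ := SidonAux.aseq hN with haa
  have ha : StrictMono a := SidonAux.aseq_strictMono hN
  have ha0 : a 0 = 1 := SidonAux.aseq_zero hN
  have hbd : ∀ k : ℕ, 1 ≤ k → a k ≤ 4 ^ h * (k : ℤ) ^ (2 * h - 1) + k :=
    fun k hk => SidonAux.aseq_bound hN k hk
  refine ⟨a, ha, fun k => SidonAux.aseq_pos hN k, ⟨⟨a 0, 0, rfl⟩, SidonAux.aseq_sidon hN⟩,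
    hbd, ?_⟩
  -- analytic part
  set e : ℕ := 2 * h - 1 with he
  have he1 : 1 ≤ e := by omega
  have hecast : ((e : ℝ)) = 2 * (h : ℝ) - 1 := by
    rw [he]; push_cast [Nat.cast_sub (by omega : 1 ≤ 2 * h)]; ring
  set C : ℝ := (4 : ℝ) ^ h + 1 with hC
  have hCpos : 0 < C := by positivity
  set p : ℝ := (1 : ℝ) / (e : ℝ) with hp
  have hpeq : p = (1 : ℝ) / (2 * (h : ℝ) - 1) := by rw [hp, hecast]
  refine ⟨(1 / C) ^ p, Real.rpow_pos_of_pos (by positivity) p, ?_⟩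
  intro t ht
  rw [← hpeq]
  have hge : ∀ k : ℕ, (k : ℤ) + 1 ≤ a k := by
    intro k
    induction k with
    | zero => simp [ha0]
    | succ k ih =>
      have h2 : a k < a (k + 1) := ha (by omega)
      push_cast
      omega
  set m : ℕ := ⌊(t / C) ^ p⌋₊ with hm
  have htC : 0 ≤ t / C := by positivity
  have hak : ∀ k : ℕ, k ≤ m → ((a k : ℝ)) ≤ t := by
    intro k hk
    rcases Nat.eq_zero_or_pos k with rfl | hkpos
    · rw [ha0]; exact_mod_cast ht
    · have h1 : a k ≤ (4 ^ h + 1) * (k : ℤ) ^ e := by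
        have hb := hbd k hkpos
        have h2 : (k : ℤ) ≤ (k : ℤ) ^ e :=
          le_self_pow₀ (by exact_mod_cast hkpos) (by omega)
        nlinarith [pow_pos (show (0:ℤ) < (k:ℤ) by exact_mod_cast hkpos) e]
      have h3 : ((a k : ℝ)) ≤ C * (k : ℝ) ^ e := by
        have := (Int.cast_le (R := ℝ)).mpr h1
        push_cast at this
        rw [hC]
        convert this using 1
      refine h3.trans ?_
      have h4 : ((k : ℝ)) ≤ (t / C) ^ p :=
        le_trans (by exact_mod_cast hk) (Nat.floor_le (by positivity))
      have h5 : ((k : ℝ)) ^ e ≤ ((t / C) ^ p) ^ e := by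
        apply pow_le_pow_left₀ (by positivity) h4 e
      have h6 : ((t / C) ^ p) ^ e = t / C := by
        rw [hp, one_div]
        exact Real.rpow_inv_natCast_pow htC (by omega)
      rw [h6] at h5
      calc C * (k : ℝ) ^ e ≤ C * (t / C) := by
            exact mul_le_mul_of_nonneg_left h5 (le_of_lt hCpos)
        _ = t := by field_simp
  set F : Finset ℤ := (Finset.range (m + 1)).image a with hF
  have hFcard : F.card = m + 1 := by
    rw [hF, Finset.card_image_of_injective _ ha.injective, Finset.card_range]
  set S : Set ℤ := {x ∈ Set.range a | (x : ℝ) ≤ t} with hSdef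
  have hFS : (↑F : Set ℤ) ⊆ S := by
    intro x hxF
    rw [hF] at hxF
    simp only [Finset.coe_image, Set.mem_image, Finset.mem_coe, Finset.mem_range] at hxF
    obtain ⟨k, hk, rfl⟩ := hxF
    exact ⟨⟨k, rfl⟩, hak k (by omega)⟩
  have hSfin : S.Finite := by
    apply Set.Finite.subset (Finset.finite_toSet ((Finset.range (⌈t⌉₊ + 1)).image a))
    intro x hxS
    obtain ⟨⟨k, rfl⟩, hle⟩ := hxS
    simp only [Finset.coe_image, Set.mem_image, Finset.mem_coe, Finset.mem_range]
    refine ⟨k, ?_, rfl⟩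
    have h1 : ((k : ℝ)) + 1 ≤ (a k : ℝ) := by exact_mod_cast hge k
    have h2 : ((k : ℝ)) < t := by linarith
    have h3 := Nat.le_ceil t
    have h4 : (k : ℝ) < (⌈t⌉₊ : ℝ) + 1 := by linarith
    exact_mod_cast (by exact_mod_cast h4 : (k : ℝ) < ((⌈t⌉₊ + 1 : ℕ) : ℝ))
  have hcard : (m + 1 : ℕ) ≤ S.ncard := by
    rw [← hFcard, ← Set.ncard_coe_finset]
    exact Set.ncard_le_ncard hFS hSfin
  have hfloor : (t / C) ^ p < (m : ℝ) + 1 := by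
    rw [hm]; exact Nat.lt_floor_add_one _
  have hKt : (1 / C) ^ p * t ^ p = (t / C) ^ p := by
    rw [← Real.mul_rpow (by positivity) (by linarith)]
    ring_nf
  rw [hKt]
  calc (t / C) ^ p ≤ (m : ℝ) + 1 := le_of_lt hfloor
    _ ≤ (S.ncard : ℝ) := by exact_mod_cast hcard
end
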